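/- arXiv:2010.05666 — 7 statements merged into one kernel-verified Lean document; each statement's English description precedes it below -/
import Mathlib

section
/- Let H = (V, E) be a linear hypergraph with at most n edges, each with at most n vertices, where n is a perfect square, and suppose every vertex has degree at least √n. If there exists a vertex v with d(v) = √n such that |adj(u)| = n for all u in adj(v) ∪ {v}, then H has exactly n edges. -/
open scoped Classical

/-- A finite hypergraph is given by its finite set of edges, each a finite set of vertices.
`Linear E` means any two distinct edges share at most one vertex. -/
def HG.Linear {V : Type*} (E : Finset (Finset V)) : Prop :=
  ∀ e₁ ∈ E, ∀ e₂ ∈ E, e₁ ≠ e₂ → (e₁ ∩ e₂).card ≤ 1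

/-- The degree of a vertex: the number of edges containing it. -/
noncomputable def HG.deg {V : Type*} (E : Finset (Finset V)) (v : V) : ℕ :=
  (E.filter (fun e => v ∈ e)).card

/-- The vertex set of the hypergraph: the union of its edges. -/
noncomputable def HG.verts {V : Type*} (E : Finset (Finset V)) : Finset V := E.sup id

/-- The adjacency of a vertex `v`: vertices distinct from `v` sharing an edge with `v`. -/
noncomputable def HG.adj {V : Type*} (E : Finset (Finset V)) (v : V) : Finset V :=
  (HG.verts E).filter (fun u => u ≠ v ∧ ∃ e ∈ E, v ∈ e ∧ u ∈ e)

/-- A proper coloring: vertices lying in a common edge receive distinct colors. -/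
def HG.Proper {V : Type*} {m : ℕ} (E : Finset (Finset V)) (f : V → Fin m) : Prop :=
  ∀ e ∈ E, ∀ u ∈ e, ∀ w ∈ e, u ≠ w → f u ≠ f w

theorem stmt2 {V : Type*} [DecidableEq V] (k : ℕ) (hk : 0 < k)
    (E : Finset (Finset V)) (hlin : HG.Linear E)
    (hE : E.card ≤ k ^ 2) (hsize : ∀ e ∈ E, e.card ≤ k ^ 2)
    (hdeg : ∀ u ∈ HG.verts E, k ≤ HG.deg E u)
    (v : V) (hv : v ∈ HG.verts E) (hdv : HG.deg E v = k)
    (hadj : ∀ u ∈ HG.adj E v ∪ {v}, (HG.adj E u).card = k ^ 2) :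
    E.card = k ^ 2 := by
  have hlin' : ∀ e₁ ∈ E, ∀ e₂ ∈ E, e₁ ≠ e₂ → (e₁ ∩ e₂).card ≤ 1 := by
    intro a ha b hb hne
    have h := hlin a ha b hb hne
    convert h using 2
    ext x
    simp
  set A := HG.adj E v with hAdef
  have hA : A.card = k ^ 2 := hadj v (by simp)
  set F := E.filter (fun e => v ∈ e) with hFdef
  have hF : F.card = k := by
    rw [← hdv]
    unfold HG.deg
    congr 1
    ext e
    rw [hFdef]
    simp [Finset.mem_filter]
  have hAsub : A ⊆ HG.verts E := by
    intro x hx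
    rw [hAdef] at hx
    unfold HG.adj at hx
    simp only [Finset.mem_filter] at hx
    exact hx.1
  -- double counting
  have hdegsum : ∀ w : V, HG.deg E w = ∑ e ∈ E, if w ∈ e then 1 else 0 := by
    intro w
    unfold HG.deg
    rw [Finset.card_filter]
    refine Finset.sum_congr rfl fun e _ => ?_
    rcases Classical.em (w ∈ e) with h | h <;> simp [h]
  have hsum : ∑ w ∈ A, HG.deg E w = ∑ e ∈ E, (e ∩ A).card := by
    calc ∑ w ∈ A, HG.deg E w
        = ∑ w ∈ A, ∑ e ∈ E, (if w ∈ e then 1 else 0) :=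
          Finset.sum_congr rfl fun w _ => hdegsum w
      _ = ∑ e ∈ E, ∑ w ∈ A, (if w ∈ e then 1 else 0) := Finset.sum_comm
      _ = ∑ e ∈ E, (e ∩ A).card := by
          refine Finset.sum_congr rfl fun e _ => ?_
          rw [Finset.inter_comm, ← Finset.filter_mem_eq_inter, Finset.card_filter]
  have h1 : k * k ^ 2 ≤ ∑ w ∈ A, HG.deg E w := by
    calc k * k ^ 2 = A.card • k := by rw [hA, smul_eq_mul]; ring
    _ ≤ ∑ w ∈ A, HG.deg E w := Finset.card_nsmul_le_sum A _ k (fun w hw => hdeg w (hAsub hw))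
  -- edges through v
  have hdisj : ∀ e ∈ F, ∀ f ∈ F, e ≠ f → Disjoint (e ∩ A) (f ∩ A) := by
    intro e he f hf hef
    rw [Finset.disjoint_left]
    intro x hx1 hx2
    simp only [Finset.mem_inter] at hx1 hx2
    have hxv : x ≠ v := by
      have h := hx1.2
      rw [hAdef] at h
      unfold HG.adj at h
      simp only [Finset.mem_filter] at h
      exact h.2.1
    simp only [hFdef, Finset.mem_filter] at he hf
    have hcard := hlin' e he.1 f hf.1 hef
    have hvin : v ∈ e ∩ f := Finset.mem_inter.2 ⟨he.2, hf.2⟩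
    have hxin : x ∈ e ∩ f := Finset.mem_inter.2 ⟨hx1.1, hx2.1⟩
    exact hxv (Finset.card_le_one.1 hcard x hxin v hvin)
  have h2 : ∑ e ∈ F, (e ∩ A).card ≤ k ^ 2 := by
    rw [← Finset.card_biUnion hdisj, ← hA]
    apply Finset.card_le_card
    intro x hx
    simp only [Finset.mem_biUnion, Finset.mem_inter] at hx
    obtain ⟨e, _, _, hxA⟩ := hx
    exact hxA
  -- edges not through v
  have h3 : ∀ e ∈ E.filter (fun e => ¬ v ∈ e), (e ∩ A).card ≤ k := by
    intro e he
    simp only [Finset.mem_filter] at he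
    have hsub : e ∩ A ⊆ F.biUnion (fun f => e ∩ f) := by
      intro x hx
      simp only [Finset.mem_inter] at hx
      have h := hx.2
      rw [hAdef] at h
      unfold HG.adj at h
      simp only [Finset.mem_filter] at h
      obtain ⟨-, -, f, hfE, hvf, hxf⟩ := h
      simp only [Finset.mem_biUnion]
      exact ⟨f, Finset.mem_filter.2 ⟨hfE, hvf⟩, Finset.mem_inter.2 ⟨hx.1, hxf⟩⟩
    calc (e ∩ A).card ≤ (F.biUnion (fun f => e ∩ f)).card := Finset.card_le_card hsub
    _ ≤ ∑ f ∈ F, (e ∩ f).card := Finset.card_biUnion_le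
    _ ≤ ∑ f ∈ F, 1 := by
        apply Finset.sum_le_sum
        intro f hf
        simp only [hFdef, Finset.mem_filter] at hf
        have hne : e ≠ f := by rintro rfl; exact he.2 hf.2
        exact hlin' e he.1 f hf.1 hne
    _ = k := by rw [Finset.sum_const, smul_eq_mul, mul_one, hF]
  set G := E.filter (fun e => ¬ v ∈ e) with hGdef
  have hsplit : ∑ e ∈ F, (e ∩ A).card + ∑ e ∈ G, (e ∩ A).card = ∑ e ∈ E, (e ∩ A).card :=
    Finset.sum_filter_add_sum_filter_not E _ _
  have h4 : ∑ e ∈ G, (e ∩ A).card ≤ G.card * k := by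
    calc ∑ e ∈ G, (e ∩ A).card ≤ ∑ _e ∈ G, k := Finset.sum_le_sum h3
    _ = G.card * k := by rw [Finset.sum_const, smul_eq_mul]
  have hcardE : F.card + G.card = E.card := Finset.card_filter_add_card_filter_not _
  have hkey : k * k ^ 2 ≤ k ^ 2 + G.card * k := by
    calc k * k ^ 2 ≤ ∑ e ∈ E, (e ∩ A).card := hsum ▸ h1
    _ = ∑ e ∈ F, (e ∩ A).card + ∑ e ∈ G, (e ∩ A).card := hsplit.symm
    _ ≤ k ^ 2 + G.card * k := Nat.add_le_add h2 h4
  have : k ^ 2 ≤ E.card := by nlinarith [hF, hcardE]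
  omega
end

section
/- Let H = (V, E) be a linear hypergraph with at most n edges, each with at most n vertices, where n is a perfect square, and suppose every vertex has degree at least √n. If there exists a vertex v with d(v) = √n such that |adj(u)| = n for all u in adj(v) ∪ {v}, then every vertex of H has degree exactly √n. -/
open scoped Classical

lemma HG.mem_adj {V : Type*} (E : Finset (Finset V)) (u x : V) :
    u ∈ HG.adj E x ↔ u ∈ HG.verts E ∧ u ≠ x ∧ ∃ e ∈ E, x ∈ e ∧ u ∈ e := by
  simp [HG.adj, Finset.mem_filter]

lemma HG.mem_verts_iff {V : Type*} (E : Finset (Finset V)) (w : V) :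
    w ∈ HG.verts E ↔ ∃ f ∈ E, w ∈ f := by
  rw [HG.verts, Finset.mem_sup]; rfl

lemma HG.mem_verts_of_mem {V : Type*} {E : Finset (Finset V)}
    {f : Finset V} {w : V} (hf : f ∈ E) (hw : w ∈ f) : w ∈ HG.verts E := by
  rw [HG.verts, Finset.mem_sup]; exact ⟨f, hf, hw⟩

lemma HG.main {V : Type*} (k : ℕ) (hk : 0 < k)
    (E : Finset (Finset V)) (hlin : HG.Linear E)
    (hE : E.card ≤ k ^ 2)
    (hdeg : ∀ u ∈ HG.verts E, k ≤ HG.deg E u)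
    (x : V) (hdx : HG.deg E x = k) (hAx : (HG.adj E x).card = k ^ 2) :
    (∀ u ∈ HG.adj E x, HG.deg E u = k) ∧
      ∀ f ∈ E, x ∉ f → ∃ u, u ∈ HG.adj E x ∧ u ∈ f := by
  set A := HG.adj E x with hA
  set Ex := E.filter (fun e => x ∈ e) with hEx
  set Ex' := E.filter (fun e => ¬ x ∈ e) with hEx'
  have hExcard : Ex.card = k := hdx
  have hsplit : Ex.card + Ex'.card = E.card :=
    Finset.card_filter_add_card_filter_not _
  have hkk : k ≤ k ^ 2 := by nlinarith
  have hEx'card : Ex'.card ≤ k ^ 2 - k := by omega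
  -- upper bound per edge not through x
  have hub : ∀ f ∈ Ex', (A.filter (fun u => u ∈ f)).card ≤ k := by
    intro f hf
    have hfE : f ∈ E := (Finset.mem_filter.mp hf).1
    have hxf : x ∉ f := (Finset.mem_filter.mp hf).2
    have hsub : A.filter (fun u => u ∈ f) ⊆ Ex.biUnion (fun e => f ∩ e) := by
      intro u hu
      obtain ⟨huA, huf⟩ := Finset.mem_filter.mp hu
      obtain ⟨hvts, hne, e, heE, hxe, hue⟩ := (HG.mem_adj E u x).mp huA
      exact Finset.mem_biUnion.mpr ⟨e, Finset.mem_filter.mpr ⟨heE, hxe⟩,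
        Finset.mem_inter.mpr ⟨huf, hue⟩⟩
    calc (A.filter (fun u => u ∈ f)).card
        ≤ (Ex.biUnion (fun e => f ∩ e)).card := Finset.card_le_card hsub
      _ ≤ ∑ e ∈ Ex, (f ∩ e).card := Finset.card_biUnion_le
      _ ≤ ∑ e ∈ Ex, 1 := by
          apply Finset.sum_le_sum
          intro e he
          obtain ⟨heE, hxe⟩ := Finset.mem_filter.mp he
          exact hlin f hfE e heE (fun h => hxf (h ▸ hxe))
      _ = k := by rw [Finset.sum_const, smul_eq_mul, mul_one, hExcard]
  -- at most one edge contains both u and x (for u ∈ A)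
  have hone : ∀ u ∈ A, (Ex.filter (fun e => u ∈ e)).card ≤ 1 := by
    intro u hu
    obtain ⟨hvts, hne, _⟩ := (HG.mem_adj E u x).mp hu
    rw [Finset.card_le_one]
    intro e₁ h₁ e₂ h₂
    by_contra hne'
    obtain ⟨h₁E, h₁x⟩ := Finset.mem_filter.mp h₁
    obtain ⟨h₂E, h₂x⟩ := Finset.mem_filter.mp h₂
    have hlin' := hlin e₁ (Finset.mem_filter.mp h₁E).1 e₂ (Finset.mem_filter.mp h₂E).1 hne'
    have hsub2 : ({u, x} : Finset V) ⊆ e₁ ∩ e₂ := by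
      intro y hy
      rcases Finset.mem_insert.mp hy with rfl | hy
      · exact Finset.mem_inter.mpr ⟨h₁x, h₂x⟩
      · rw [Finset.mem_singleton] at hy; subst hy
        exact Finset.mem_inter.mpr ⟨(Finset.mem_filter.mp h₁E).2, (Finset.mem_filter.mp h₂E).2⟩
    have h2 : ({u, x} : Finset V).card = 2 := by
      rw [Finset.card_insert_of_notMem (by simpa using hne), Finset.card_singleton]
    have h3 := Finset.card_le_card hsub2
    omega
  -- degree split
  have hdsplit : ∀ u : V, (Ex.filter (fun e => u ∈ e)).card
      + (Ex'.filter (fun e => u ∈ e)).card = HG.deg E u := by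
    intro u
    have h := Finset.card_filter_add_card_filter_not
      (s := E.filter (fun e => u ∈ e)) (p := fun e => x ∈ e)
    rw [Finset.filter_comm (p := fun e => u ∈ e) (q := fun e => x ∈ e),
        Finset.filter_comm (p := fun e => u ∈ e) (q := fun e => ¬ x ∈ e)] at h
    exact h
  -- lower bound per vertex of A
  have hlb : ∀ u ∈ A, k - 1 ≤ (Ex'.filter (fun e => u ∈ e)).card := by
    intro u hu
    have hvts := ((HG.mem_adj E u x).mp hu).1
    have hdu := hdeg u hvts
    have h1 := hone u hu
    have h2 := hdsplit u
    omega
  -- double counting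
  have hdc : ∑ f ∈ Ex', (A.filter (fun u => u ∈ f)).card
      = ∑ u ∈ A, (Ex'.filter (fun e => u ∈ e)).card := by
    simp_rw [Finset.card_filter]
    exact Finset.sum_comm
  -- the arithmetic identity
  have hid : (k ^ 2 - k) * k = k ^ 2 * (k - 1) := by
    obtain ⟨m, rfl⟩ : ∃ m, k = m + 1 := ⟨k - 1, by omega⟩
    have e1 : (m + 1) ^ 2 = m ^ 2 + 2 * m + 1 := by ring
    have e2 : ∀ t : ℕ, t + 2 * m + 1 - (m + 1) = t + m := fun t => by omega
    rw [e1, e2, Nat.add_sub_cancel]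
    ring
  have hS1 : k ^ 2 * (k - 1) ≤ ∑ u ∈ A, (Ex'.filter (fun e => u ∈ e)).card := by
    calc k ^ 2 * (k - 1) = ∑ _u ∈ A, (k - 1) := by
          rw [Finset.sum_const, smul_eq_mul, hAx]
      _ ≤ _ := Finset.sum_le_sum hlb
  have hS2 : ∑ f ∈ Ex', (A.filter (fun u => u ∈ f)).card ≤ Ex'.card * k := by
    calc ∑ f ∈ Ex', (A.filter (fun u => u ∈ f)).card ≤ ∑ _f ∈ Ex', k :=
          Finset.sum_le_sum hub
      _ = Ex'.card * k := by rw [Finset.sum_const, smul_eq_mul]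
  have hmk : Ex'.card * k ≤ k ^ 2 * (k - 1) := by
    calc Ex'.card * k ≤ (k ^ 2 - k) * k := Nat.mul_le_mul_right k hEx'card
      _ = k ^ 2 * (k - 1) := hid
  have hSeq : ∑ u ∈ A, (Ex'.filter (fun e => u ∈ e)).card = k ^ 2 * (k - 1) := by
    omega
  have hSeq' : ∑ f ∈ Ex', (A.filter (fun u => u ∈ f)).card = Ex'.card * k := by
    omega
  -- pointwise equalities
  have hpt1 : ∀ u ∈ A, (Ex'.filter (fun e => u ∈ e)).card = k - 1 := by
    intro u hu
    by_contra hne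
    have hlt : k - 1 < (Ex'.filter (fun e => u ∈ e)).card :=
      lt_of_le_of_ne (hlb u hu) (fun h => hne h.symm)
    have : ∑ _u ∈ A, (k - 1) < ∑ u ∈ A, (Ex'.filter (fun e => u ∈ e)).card :=
      Finset.sum_lt_sum hlb ⟨u, hu, hlt⟩
    rw [Finset.sum_const, smul_eq_mul, hAx] at this
    omega
  have hpt2 : ∀ f ∈ Ex', (A.filter (fun u => u ∈ f)).card = k := by
    intro f hf
    by_contra hne
    have hlt : (A.filter (fun u => u ∈ f)).card < k :=
      lt_of_le_of_ne (hub f hf) hne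
    have : ∑ f ∈ Ex', (A.filter (fun u => u ∈ f)).card < ∑ _f ∈ Ex', k :=
      Finset.sum_lt_sum hub ⟨f, hf, hlt⟩
    rw [Finset.sum_const, smul_eq_mul] at this
    omega
  constructor
  · intro u hu
    have h1 := hone u hu
    have h2 := hdsplit u
    have h3 := hpt1 u hu
    have hvts := ((HG.mem_adj E u x).mp hu).1
    have hdu := hdeg u hvts
    omega
  · intro f hfE hxf
    have hf' : f ∈ Ex' := Finset.mem_filter.mpr ⟨hfE, hxf⟩
    have h := hpt2 f hf'
    have hpos : 0 < (A.filter (fun u => u ∈ f)).card := by omega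
    obtain ⟨u, hu⟩ := Finset.card_pos.mp hpos
    obtain ⟨huA, huf⟩ := Finset.mem_filter.mp hu
    exact ⟨u, huA, huf⟩

theorem stmt4 {V : Type*} [DecidableEq V] (k : ℕ) (hk : 0 < k)
    (E : Finset (Finset V)) (hlin : HG.Linear E)
    (hE : E.card ≤ k ^ 2) (hsize : ∀ e ∈ E, e.card ≤ k ^ 2)
    (hdeg : ∀ u ∈ HG.verts E, k ≤ HG.deg E u)
    (v : V) (hv : v ∈ HG.verts E) (hdv : HG.deg E v = k)
    (hadj : ∀ u ∈ HG.adj E v ∪ {v}, (HG.adj E u).card = k ^ 2) :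
    ∀ u ∈ HG.verts E, HG.deg E u = k := by
  have hAv : (HG.adj E v).card = k ^ 2 :=
    hadj v (Finset.mem_union_right _ (Finset.mem_singleton_self v))
  obtain ⟨hdegA, hmeet⟩ := HG.main k hk E hlin hE hdeg v hdv hAv
  intro w hw
  by_cases hwv : w = v
  · rw [hwv]; exact hdv
  by_cases hwA : w ∈ HG.adj E v
  · exact hdegA w hwA
  -- otherwise find an edge through w, avoiding v
  obtain ⟨f, hfE, hwf⟩ := (HG.mem_verts_iff E w).mp hw
  have hvf : v ∉ f := by
    intro hvf
    exact hwA ((HG.mem_adj E w v).mpr ⟨hw, hwv, f, hfE, hvf, hwf⟩)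
  obtain ⟨u, huA, huf⟩ := hmeet f hfE hvf
  have hdu : HG.deg E u = k := hdegA u huA
  have hAu : (HG.adj E u).card = k ^ 2 :=
    hadj u (Finset.mem_union_left _ huA)
  obtain ⟨hdegA', _⟩ := HG.main k hk E hlin hE hdeg u hdu hAu
  apply hdegA'
  refine (HG.mem_adj E w u).mpr ⟨hw, ?_, f, hfE, huf, hwf⟩
  intro h; subst h; exact hwA huA
end

section
/- Let H = (V, E) be a linear hypergraph with at most n edges, each with at most n vertices, where n is a perfect square, and suppose every vertex has degree at least √n. If there exists a vertex v with d(v) = √n such that |adj(u)| = n for all u in adj(v) ∪ {v}, then every pair of distinct edges of H intersects in exactly one vertex. -/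
open scoped Classical

lemma inter_indep {V : Type*} (i1 i2 : DecidableEq V) (a b : Finset V) :
    (@Inter.inter _ (@Finset.instInter V i1) a b) = (@Inter.inter _ (@Finset.instInter V i2) a b) := by
  ext x
  rw [@Finset.mem_inter _ i1, @Finset.mem_inter _ i2]

lemma sum_ge_aux {α : Type*} {s : Finset α} {f : α → ℕ} {c : ℕ} {u₀ : α}
    (h : ∀ u ∈ s, c ≤ f u) (hu : u₀ ∈ s) (h0 : c + 1 ≤ f u₀) :
    c * s.card + 1 ≤ ∑ u ∈ s, f u := by
  have key : ∑ u ∈ s, (c + if u = u₀ then 1 else 0) ≤ ∑ u ∈ s, f u := by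
    apply Finset.sum_le_sum
    intro u hus
    by_cases hu0 : u = u₀
    · subst hu0; simpa using h0
    · simp [hu0, h u hus]
  calc c * s.card + 1 = ∑ u ∈ s, (c + if u = u₀ then 1 else 0) := by
        rw [Finset.sum_add_distrib, Finset.sum_const, Finset.sum_ite_eq' s u₀ (fun _ => 1),
          if_pos hu, smul_eq_mul, mul_comm]
    _ ≤ _ := key

lemma sum_le_aux {α : Type*} {s : Finset α} {f : α → ℕ} {c : ℕ} {u₀ : α}
    (h : ∀ u ∈ s, f u ≤ c) (hu : u₀ ∈ s) (h0 : f u₀ + 1 ≤ c) :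
    (∑ u ∈ s, f u) + 1 ≤ c * s.card := by
  have key : ∑ u ∈ s, (f u + if u = u₀ then 1 else 0) ≤ ∑ u ∈ s, c := by
    apply Finset.sum_le_sum
    intro u hus
    by_cases hu0 : u = u₀
    · subst hu0; simpa using h0
    · simp [hu0, h u hus]
  calc (∑ u ∈ s, f u) + 1 = ∑ u ∈ s, (f u + if u = u₀ then 1 else 0) := by
        rw [Finset.sum_add_distrib, Finset.sum_ite_eq' s u₀ (fun _ => 1), if_pos hu]
    _ ≤ ∑ u ∈ s, c := key
    _ = c * s.card := by rw [Finset.sum_const, smul_eq_mul, mul_comm]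

lemma key {V : Type*} [DecidableEq V] (k : ℕ) (hk : 0 < k)
    (E : Finset (Finset V)) (hlin : HG.Linear E) (hE : E.card ≤ k ^ 2)
    (hdeg : ∀ u ∈ HG.verts E, k ≤ HG.deg E u)
    (w : V) (hdw : HG.deg E w = k) (haw : (HG.adj E w).card = k ^ 2) :
    (∀ u ∈ HG.adj E w, HG.deg E u = k) ∧
    (∀ e ∈ E, w ∉ e → ∀ f ∈ E, w ∈ f → (e ∩ f).Nonempty) := by
  obtain ⟨c, hc⟩ : ∃ c, k = c + 1 := ⟨k - 1, by omega⟩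
  -- bridge classical instances to the ambient DecidableEq
  have hlin' : ∀ e₁ ∈ E, ∀ e₂ ∈ E, e₁ ≠ e₂ → (e₁ ∩ e₂).card ≤ 1 := by
    intro a ha b hb hab
    have h := hlin a ha b hb hab
    rwa [inter_indep] at h
  have hdegEq : ∀ u : V, HG.deg E u = (E.filter (fun e => u ∈ e)).card := by
    intro u
    simp only [HG.deg]
    congr!
  have memA : ∀ u : V, u ∈ HG.adj E w ↔
      ((∃ e ∈ E, u ∈ e) ∧ u ≠ w ∧ ∃ e ∈ E, w ∈ e ∧ u ∈ e) := by
    intro u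
    simp [HG.adj, HG.verts, Finset.mem_sup]
  set F : Finset (Finset V) := E.filter (fun e => w ∈ e) with hFdef
  set E' : Finset (Finset V) := E.filter (fun e => w ∉ e) with hE'def
  set A : Finset V := HG.adj E w with hAdef
  have hawA : A.card = k ^ 2 := haw
  have memV : ∀ u : V, u ∈ HG.verts E ↔ ∃ e ∈ E, u ∈ e := by
    intro u; simp [HG.verts, Finset.mem_sup]
  have hF : F.card = k := by rw [hFdef, ← hdegEq]; exact hdw
  have hE'k : E'.card ≤ c * k := by
    have h1 : F.card + E'.card = E.card := by
      rw [hFdef, hE'def]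
      exact Finset.card_filter_add_card_filter_not (p := fun e => w ∈ e)
    have h2 : k ^ 2 = c * k + k := by rw [hc]; ring
    omega
  have memF : ∀ f, f ∈ F ↔ f ∈ E ∧ w ∈ f := by intro f; rw [hFdef, Finset.mem_filter]
  have memE' : ∀ e, e ∈ E' ↔ e ∈ E ∧ w ∉ e := by intro e; rw [hE'def, Finset.mem_filter]
  -- adjacency as union of edges through w
  have adjEq : A = F.biUnion (fun f => f.erase w) := by
    ext u
    rw [hAdef, memA]
    simp only [Finset.mem_biUnion, Finset.mem_erase, memF]
    constructor
    · rintro ⟨-, hne, e, he, hwe, hue⟩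
      exact ⟨e, ⟨he, hwe⟩, hne, hue⟩
    · rintro ⟨f, ⟨hf, hwf⟩, hne, huf⟩
      exact ⟨⟨f, hf, huf⟩, hne, f, hf, hwf, huf⟩
  -- t u : number of edges through u not through w
  set t : V → ℕ := fun u => (E'.filter (fun e => u ∈ e)).card with htdef
  have hdegt : ∀ u ∈ A, (E.filter (fun e => u ∈ e)).card ≤ t u + 1 := by
    intro u hu
    rw [hAdef, memA] at hu
    obtain ⟨-, hne, -⟩ := hu
    set D : Finset (Finset V) := E.filter (fun e => u ∈ e ∧ w ∈ e) with hDdef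
    have memD : ∀ e, e ∈ D ↔ e ∈ E ∧ u ∈ e ∧ w ∈ e := by
      intro e; rw [hDdef, Finset.mem_filter]
    have hD1 : D.card ≤ 1 := by
      apply Finset.card_le_one.2
      intro a ha b hb
      by_contra hab
      obtain ⟨ha, hua, hwa⟩ := (memD a).1 ha
      obtain ⟨hb, hub, hwb⟩ := (memD b).1 hb
      have hsub : ({u, w} : Finset V) ⊆ a ∩ b := by
        intro x hx
        simp only [Finset.mem_insert, Finset.mem_singleton] at hx
        rcases hx with rfl | rfl <;> simp [Finset.mem_inter, *]
      have h2 : ({u, w} : Finset V).card = 2 := by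
        rw [Finset.card_insert_of_notMem (by simpa using hne), Finset.card_singleton]
      have := (Finset.card_le_card hsub).trans (hlin' a ha b hb hab)
      omega
    have hsub : E.filter (fun e => u ∈ e) ⊆ (E'.filter (fun e => u ∈ e)) ∪ D := by
      intro e he
      obtain ⟨he, hue⟩ := Finset.mem_filter.1 he
      by_cases hwe : w ∈ e
      · exact Finset.mem_union_right _ ((memD e).2 ⟨he, hue, hwe⟩)
      · exact Finset.mem_union_left _ (Finset.mem_filter.2 ⟨(memE' e).2 ⟨he, hwe⟩, hue⟩)
    calc (E.filter (fun e => u ∈ e)).card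
        ≤ ((E'.filter (fun e => u ∈ e)) ∪ D).card := Finset.card_le_card hsub
      _ ≤ t u + D.card := Finset.card_union_le _ _
      _ ≤ t u + 1 := by omega
  have hAverts : ∀ u ∈ A, k ≤ (E.filter (fun e => u ∈ e)).card := by
    intro u hu
    rw [← hdegEq]
    apply hdeg
    rw [hAdef, memA] at hu
    exact (memV u).2 hu.1
  have htlow : ∀ u ∈ A, c ≤ t u := by
    intro u hu
    have h1 := hAverts u hu
    have h2 := hdegt u hu
    omega
  -- upper bound on (A ∩ e).card for e ∈ E'
  have hsub2 : ∀ e ∈ E', A ∩ e ⊆ F.biUnion (fun f => f.erase w ∩ e) := by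
    intro e he
    rw [adjEq]
    intro x hx
    obtain ⟨hx1, hx2⟩ := Finset.mem_inter.1 hx
    obtain ⟨f, hf, hxf⟩ := Finset.mem_biUnion.1 hx1
    exact Finset.mem_biUnion.2 ⟨f, hf, Finset.mem_inter.2 ⟨hxf, hx2⟩⟩
  have hone : ∀ e ∈ E', ∀ f ∈ F, (f.erase w ∩ e).card ≤ 1 := by
    intro e he f hf
    obtain ⟨heE, hwe⟩ := (memE' e).1 he
    obtain ⟨hfE, hwf⟩ := (memF f).1 hf
    have hne : f ≠ e := by rintro rfl; exact hwe hwf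
    calc (f.erase w ∩ e).card ≤ (f ∩ e).card :=
          Finset.card_le_card (Finset.inter_subset_inter (Finset.erase_subset _ _) le_rfl)
      _ ≤ 1 := hlin' f hfE e heE hne
  have hsup : ∀ e ∈ E', (A ∩ e).card ≤ k := by
    intro e he
    calc (A ∩ e).card ≤ (F.biUnion (fun f => f.erase w ∩ e)).card :=
          Finset.card_le_card (hsub2 e he)
      _ ≤ ∑ f ∈ F, (f.erase w ∩ e).card := Finset.card_biUnion_le
      _ ≤ ∑ f ∈ F, 1 := Finset.sum_le_sum (fun f hf => hone e he f hf)
      _ = k := by rw [Finset.sum_const, smul_eq_mul, mul_one, hF]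
  -- double counting
  have hcount : ∑ u ∈ A, t u = ∑ e ∈ E', (A ∩ e).card := by
    simp only [htdef, Finset.card_filter]
    rw [Finset.sum_comm]
    apply Finset.sum_congr rfl
    intro e he
    rw [← Finset.card_filter, Finset.filter_mem_eq_inter]
  set S : ℕ := ∑ u ∈ A, t u with hSdef
  have hlow : c * k ^ 2 ≤ S := by
    calc c * k ^ 2 = c * A.card := by rw [hawA]
      _ = ∑ u ∈ A, c := by rw [Finset.sum_const, smul_eq_mul, mul_comm]
      _ ≤ S := Finset.sum_le_sum htlow
  have hup : S ≤ c * k ^ 2 := by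
    calc S = ∑ e ∈ E', (A ∩ e).card := hcount
      _ ≤ ∑ e ∈ E', k := Finset.sum_le_sum hsup
      _ = E'.card * k := by rw [Finset.sum_const, smul_eq_mul]
      _ ≤ (c * k) * k := Nat.mul_le_mul_right _ hE'k
      _ = c * k ^ 2 := by ring
  have hS : S = c * k ^ 2 := le_antisymm hup hlow
  constructor
  · intro u hu
    have hu' : u ∈ A := by rw [hAdef]; exact hu
    have htc : t u ≤ c := by
      by_contra hlt
      push_neg at hlt
      have h3 := sum_ge_aux htlow hu' hlt
      rw [hawA] at h3
      omega
    have h1 := hdegt u hu'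
    have h2 := hAverts u hu'
    rw [hdegEq]
    omega
  · intro e he hwe f hf hwf
    by_contra hne
    rw [Finset.not_nonempty_iff_eq_empty] at hne
    have heE' : e ∈ E' := (memE' e).2 ⟨he, hwe⟩
    have hfF : f ∈ F := (memF f).2 ⟨hf, hwf⟩
    have hsA : (A ∩ e).card ≤ c := by
      have h0 : (f.erase w ∩ e).card = 0 := by
        have hss : f.erase w ∩ e ⊆ e ∩ f := by
          intro x hx
          obtain ⟨h1, h2⟩ := Finset.mem_inter.1 hx
          exact Finset.mem_inter.2 ⟨h2, (Finset.mem_erase.1 h1).2⟩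
        rw [hne] at hss
        simpa using Finset.card_le_card hss
      calc (A ∩ e).card ≤ ∑ g ∈ F, (g.erase w ∩ e).card :=
            (Finset.card_le_card (hsub2 e heE')).trans Finset.card_biUnion_le
        _ = (f.erase w ∩ e).card + ∑ g ∈ F.erase f, (g.erase w ∩ e).card :=
            (Finset.add_sum_erase F _ hfF).symm
        _ ≤ 0 + ∑ g ∈ F.erase f, 1 := by
            rw [h0]
            exact Nat.add_le_add le_rfl (Finset.sum_le_sum (fun g hg =>
              hone e heE' g (Finset.mem_of_mem_erase hg)))
        _ = (F.erase f).card := by rw [Finset.sum_const, smul_eq_mul, mul_one, zero_add]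
        _ ≤ c := by
            have := Finset.card_erase_of_mem hfF
            omega
    have hkey : (∑ x ∈ E', (A ∩ x).card) + 1 ≤ k * E'.card :=
      sum_le_aux hsup heE' (by omega)
    rw [← hcount] at hkey
    have h4 : k * E'.card ≤ k * (c * k) := Nat.mul_le_mul_left _ hE'k
    have h5 : k * (c * k) = c * k ^ 2 := by ring
    omega

theorem stmt5 {V : Type*} [DecidableEq V] (k : ℕ) (hk : 0 < k)
    (E : Finset (Finset V)) (hlin : HG.Linear E)
    (hE : E.card ≤ k ^ 2) (hsize : ∀ e ∈ E, e.card ≤ k ^ 2)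
    (hdeg : ∀ u ∈ HG.verts E, k ≤ HG.deg E u)
    (v : V) (hv : v ∈ HG.verts E) (hdv : HG.deg E v = k)
    (hadj : ∀ u ∈ HG.adj E v ∪ {v}, (HG.adj E u).card = k ^ 2) :
    ∀ e₁ ∈ E, ∀ e₂ ∈ E, e₁ ≠ e₂ → (e₁ ∩ e₂).card = 1 := by
  have hlin' : ∀ e₁ ∈ E, ∀ e₂ ∈ E, e₁ ≠ e₂ → (e₁ ∩ e₂).card ≤ 1 := by
    intro a ha b hb hab
    have h := hlin a ha b hb hab
    rwa [inter_indep] at h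
  have hvadj : (HG.adj E v).card = k ^ 2 :=
    hadj v (Finset.mem_union_right _ (Finset.mem_singleton_self v))
  have keyv := key k hk E hlin hE hdeg v hdv hvadj
  intro e₁ he₁ e₂ he₂ hne12
  have hle := hlin' e₁ he₁ e₂ he₂ hne12
  suffices hne : (e₁ ∩ e₂).Nonempty by
    have := Finset.card_pos.2 hne
    omega
  by_cases hv1 : v ∈ e₁
  · by_cases hv2 : v ∈ e₂
    · exact ⟨v, Finset.mem_inter.2 ⟨hv1, hv2⟩⟩
    · obtain ⟨x, hx⟩ := keyv.2 e₂ he₂ hv2 e₁ he₁ hv1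
      obtain ⟨h1, h2⟩ := Finset.mem_inter.1 hx
      exact ⟨x, Finset.mem_inter.2 ⟨h2, h1⟩⟩
  · by_cases hv2 : v ∈ e₂
    · exact keyv.2 e₁ he₁ hv1 e₂ he₂ hv2
    · -- neither contains v
      have hv' : ∃ f ∈ E, v ∈ f := by
        have := hv
        simpa [HG.verts, Finset.mem_sup] using this
      obtain ⟨f, hfE, hvf⟩ := hv'
      obtain ⟨x, hx⟩ := keyv.2 e₁ he₁ hv1 f hfE hvf
      obtain ⟨hx1, hxf⟩ := Finset.mem_inter.1 hx
      have memA : ∀ u : V, u ∈ HG.adj E v ↔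
          ((∃ e ∈ E, u ∈ e) ∧ u ≠ v ∧ ∃ e ∈ E, v ∈ e ∧ u ∈ e) := by
        intro u
        simp [HG.adj, HG.verts, Finset.mem_sup]
      have hxadj : x ∈ HG.adj E v :=
        (memA x).2 ⟨⟨e₁, he₁, hx1⟩, by rintro rfl; exact hv1 hx1, f, hfE, hvf, hxf⟩
      have hdx : HG.deg E x = k := keyv.1 x hxadj
      have hax : (HG.adj E x).card = k ^ 2 := hadj x (Finset.mem_union_left _ hxadj)
      have keyx := key k hk E hlin hE hdeg x hdx hax
      by_cases hx2 : x ∈ e₂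
      · exact ⟨x, Finset.mem_inter.2 ⟨hx1, hx2⟩⟩
      · obtain ⟨y, hy⟩ := keyx.2 e₂ he₂ hx2 e₁ he₁ hx1
        obtain ⟨h1, h2⟩ := Finset.mem_inter.1 hy
        exact ⟨y, Finset.mem_inter.2 ⟨h2, h1⟩⟩
end

section
/- Let H = (V, E) be a linear hypergraph with at most n edges, each with at most n vertices, where n is a perfect square, and suppose every vertex has degree at least √n. Suppose there exists a vertex v with d(v) = √n such that |adj(u)| = n for all u in adj(v) ∪ {v}. Then for every edge E of H and every vertex u not in E, there is exactly one vertex of E that is not adjacent to u. -/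
open scoped Classical

/-!
Let `w` be a vertex of degree `k` with `k²` neighbours. For an edge `f ∋ w`, the edges meeting
`f` are those through `w` together with, for each `u ∈ f \ {w}`, the `deg u - 1` other edges
through `u`; by linearity they are all distinct, so `k + (|f| - 1)(k - 1) ≤ |E| ≤ k²`. Hence every
edge through `w` has at most `k + 1` vertices, and as the `k` edges through `w` carry `k²`
neighbours, each has exactly `k + 1`. Equality now holds throughout: every vertex of `f` has degree
`k` and every edge meets `f`.

Applied to `v`, this shows that every edge contains `v` or a neighbour of `v`, where the argument
applies again. So all edges have `k + 1` vertices, all degrees are `k` and any two edges meet. For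
`u ∉ e`, the `k` edges through `u` then meet `e` in `k` distinct points, which are exactly the
neighbours of `u` in `e`, and one point of `e` is left.
-/

theorem Nat.le_of_mul_sub_one_le_sq_sub_self {a k : ℕ} (h : a * (k - 1) ≤ k ^ 2 - k)
    (ha : a ≤ k ^ 2) : a ≤ k := by
  rcases Nat.lt_or_ge k 2 with hk | hk
  · interval_cases k <;> simpa using ha
  · rw [sq, ← Nat.mul_sub_one] at h
    exact Nat.le_of_mul_le_mul_right h (by omega)

namespace HG

open Finset

variable {V : Type*} {E : Finset (Finset V)}

theorem mem_verts {u : V} : u ∈ verts E ↔ ∃ e ∈ E, u ∈ e := by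
  simp [verts]

theorem mem_adj_s6 {u w : V} : u ∈ adj E w ↔ u ≠ w ∧ ∃ e ∈ E, w ∈ e ∧ u ∈ e := by
  simp only [adj, mem_filter, mem_verts, and_iff_right_iff_imp]
  rintro ⟨-, e, he, -, hue⟩
  exact ⟨e, he, hue⟩

theorem deg_pos {e : Finset V} {u : V} (he : e ∈ E) (hu : u ∈ e) : 0 < deg E u :=
  card_pos.2 ⟨e, mem_filter.2 ⟨he, hu⟩⟩

theorem Linear.eq_of_mem_of_mem (hlin : Linear E) {e₁ e₂ : Finset V} (he₁ : e₁ ∈ E)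
    (he₂ : e₂ ∈ E) {x y : V} (hxy : x ≠ y) (hx₁ : x ∈ e₁) (hy₁ : y ∈ e₁) (hx₂ : x ∈ e₂)
    (hy₂ : y ∈ e₂) : e₁ = e₂ := by
  by_contra hne
  have := hlin e₁ he₁ e₂ he₂ hne
  have : 1 < (e₁ ∩ e₂).card :=
    one_lt_card.2 ⟨x, mem_inter.2 ⟨hx₁, hx₂⟩, y, mem_inter.2 ⟨hy₁, hy₂⟩, hxy⟩
  omega

theorem Linear.card_adj (hlin : Linear E) (w : V) :
    (adj E w).card = ∑ f ∈ E.filter (w ∈ ·), (f.card - 1) := by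
  have hadj : adj E w = (E.filter (w ∈ ·)).biUnion (·.erase w) := by
    ext u
    simp only [mem_adj_s6, mem_biUnion, mem_filter, mem_erase]
    exact ⟨fun ⟨hne, e, he, hwe, hue⟩ => ⟨e, ⟨he, hwe⟩, hne, hue⟩,
      fun ⟨e, ⟨he, hwe⟩, hne, hue⟩ => ⟨hne, e, he, hwe, hue⟩⟩
  rw [hadj, card_biUnion]
  · exact sum_congr rfl fun f hf => card_erase_of_mem (mem_filter.1 hf).2
  · intro f₁ h₁ f₂ h₂ hne
    simp only [mem_coe, mem_filter] at h₁ h₂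
    refine disjoint_left.2 fun u hu₁ hu₂ => hne ?_
    rw [mem_erase] at hu₁ hu₂
    exact hlin.eq_of_mem_of_mem h₁.1 h₂.1 hu₁.1 hu₁.2 h₁.2 hu₂.2 h₂.2

theorem Linear.card_filter_not_disjoint (hlin : Linear E) {f : Finset V} (hf : f ∈ E)
    {w : V} (hw : w ∈ f) :
    (E.filter fun g => ¬Disjoint g f).card =
      deg E w + ∑ u ∈ f.erase w, (deg E u - 1) := by
  have hsplit : E.filter (fun g => ¬Disjoint g f) =
      E.filter (w ∈ ·) ∪ (f.erase w).biUnion fun u => (E.filter (u ∈ ·)).erase f := by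
    ext g
    simp only [mem_filter, mem_union, mem_biUnion, mem_erase, not_disjoint_iff]
    constructor
    · rintro ⟨hg, x, hxg, hxf⟩
      by_cases hxw : x = w
      · exact .inl ⟨hg, hxw ▸ hxg⟩
      by_cases hgf : g = f
      · exact .inl ⟨hg, hgf ▸ hw⟩
      exact .inr ⟨x, ⟨hxw, hxf⟩, hgf, hg, hxg⟩
    · rintro (⟨hg, hwg⟩ | ⟨u, ⟨-, hu⟩, -, hg, hug⟩)
      · exact ⟨hg, w, hwg, hw⟩
      · exact ⟨hg, u, hug, hu⟩
  rw [hsplit, card_union_of_disjoint, card_biUnion]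
  · exact congrArg (deg E w + ·) <| sum_congr rfl fun u hu =>
      card_erase_of_mem (mem_filter.2 ⟨hf, mem_of_mem_erase hu⟩)
  · intro u₁ h₁ u₂ h₂ hne
    simp only [mem_coe, mem_erase] at h₁ h₂
    refine disjoint_left.2 fun g hg₁ hg₂ => ?_
    simp only [mem_erase, mem_filter] at hg₁ hg₂
    exact hg₁.1 (hlin.eq_of_mem_of_mem hg₁.2.1 hf hne hg₁.2.2 hg₂.2.2 h₁.2 h₂.2)
  · refine disjoint_left.2 fun g hgw hgu => ?_
    obtain ⟨u, hu, hg⟩ := mem_biUnion.1 hgu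
    simp only [mem_erase, mem_filter] at hgw hu hg
    exact hg.1 (hlin.eq_of_mem_of_mem hg.2.1 hf hu.1.symm hgw.2 hg.2.2 hw hu.2)

section CardAdjEqSq

variable {k : ℕ} {w : V} {f : Finset V}

theorem Linear.sum_erase_deg_sub_one_le (hlin : Linear E) (hE : E.card ≤ k ^ 2)
    (hdw : deg E w = k) (hf : f ∈ E) (hw : w ∈ f) :
    ∑ u ∈ f.erase w, (deg E u - 1) ≤ k ^ 2 - k := by
  have := card_filter_le E fun g => ¬Disjoint g f
  rw [hlin.card_filter_not_disjoint hf hw, hdw] at this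
  omega

theorem Linear.card_eq_of_card_adj_eq_sq (hlin : Linear E) (hE : E.card ≤ k ^ 2)
    (hdeg : ∀ u ∈ verts E, k ≤ deg E u) (hdw : deg E w = k) (haw : (adj E w).card = k ^ 2)
    (hf : f ∈ E) (hw : w ∈ f) : f.card = k + 1 := by
  have hsum : ∑ g ∈ E.filter (w ∈ ·), (g.card - 1) = k ^ 2 := by rw [← hlin.card_adj, haw]
  have hle : ∀ g ∈ E.filter (w ∈ ·), g.card - 1 ≤ k := by
    intro g hg
    obtain ⟨hgE, hwg⟩ := mem_filter.1 hg
    refine Nat.le_of_mul_sub_one_le_sq_sub_self ?_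
      (hsum ▸ single_le_sum (f := fun g => g.card - 1) (fun _ _ => Nat.zero_le _) hg)
    calc (g.card - 1) * (k - 1) = (g.erase w).card • (k - 1) := by
          rw [card_erase_of_mem hwg, smul_eq_mul]
      _ ≤ ∑ u ∈ g.erase w, (deg E u - 1) := card_nsmul_le_sum _ _ _ fun u hu =>
          Nat.sub_le_sub_right (hdeg u (mem_verts.2 ⟨g, hgE, mem_of_mem_erase hu⟩)) 1
      _ ≤ k ^ 2 - k := hlin.sum_erase_deg_sub_one_le hE hdw hgE hwg
  have hconst : ∑ g ∈ E.filter (w ∈ ·), (g.card - 1) = ∑ _g ∈ E.filter (w ∈ ·), k := by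
    rw [hsum, sum_const, smul_eq_mul, ← deg, hdw, sq]
  have := (sum_eq_sum_iff_of_le hle).1 hconst f (mem_filter.2 ⟨hf, hw⟩)
  have := card_pos.2 ⟨w, hw⟩
  omega

theorem Linear.deg_eq_of_card_adj_eq_sq (hlin : Linear E) (hE : E.card ≤ k ^ 2)
    (hdeg : ∀ u ∈ verts E, k ≤ deg E u) (hdw : deg E w = k) (haw : (adj E w).card = k ^ 2)
    (hf : f ∈ E) (hw : w ∈ f) {u : V} (hu : u ∈ f) : deg E u = k := by
  by_cases huw : u = w
  · exact huw ▸ hdw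
  have hcard : (f.erase w).card = k := by
    rw [card_erase_of_mem hw, hlin.card_eq_of_card_adj_eq_sq hE hdeg hdw haw hf hw,
      Nat.add_sub_cancel]
  have hge : ∀ x ∈ f.erase w, k - 1 ≤ deg E x - 1 := fun x hx =>
    Nat.sub_le_sub_right (hdeg x (mem_verts.2 ⟨f, hf, mem_of_mem_erase hx⟩)) 1
  have hconst : ∑ _x ∈ f.erase w, (k - 1) = ∑ x ∈ f.erase w, (deg E x - 1) := by
    refine le_antisymm (sum_le_sum hge) ?_
    rw [sum_const, hcard, smul_eq_mul, Nat.mul_sub_one, ← sq]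
    exact hlin.sum_erase_deg_sub_one_le hE hdw hf hw
  have := (sum_eq_sum_iff_of_le hge).1 hconst u (mem_erase.2 ⟨huw, hu⟩)
  have := hdeg u (mem_verts.2 ⟨f, hf, hu⟩)
  have := hdw ▸ deg_pos hf hw
  omega

theorem Linear.not_disjoint_of_card_adj_eq_sq (hlin : Linear E) (hE : E.card ≤ k ^ 2)
    (hdeg : ∀ u ∈ verts E, k ≤ deg E u) (hdw : deg E w = k) (haw : (adj E w).card = k ^ 2)
    (hf : f ∈ E) (hw : w ∈ f) {g : Finset V} (hg : g ∈ E) : ¬Disjoint g f := by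
  have hk : 0 < k := hdw ▸ deg_pos hf hw
  have hcount : (E.filter fun g => ¬Disjoint g f).card = k ^ 2 := by
    rw [hlin.card_filter_not_disjoint hf hw, hdw, sum_congr rfl fun u hu => by
      rw [hlin.deg_eq_of_card_adj_eq_sq hE hdeg hdw haw hf hw (mem_of_mem_erase hu)],
      sum_const, card_erase_of_mem hw, hlin.card_eq_of_card_adj_eq_sq hE hdeg hdw haw hf hw,
      smul_eq_mul, Nat.add_sub_cancel]
    obtain ⟨k, rfl⟩ := Nat.exists_eq_add_of_lt hk
    simp only [Nat.add_sub_cancel]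
    ring
  exact card_filter_eq_iff.1 (le_antisymm (card_filter_le _ _) (hcount ▸ hE)) g hg

end CardAdjEqSq

theorem Linear.card_filter_mem_adj (hlin : Linear E) {e : Finset V} (he : e ∈ E) {u : V}
    [DecidablePred (· ∈ adj E u)] (hu : u ∉ e) (hmeet : ∀ f ∈ E, u ∈ f → ¬Disjoint e f) :
    (e.filter (· ∈ adj E u)).card = deg E u := by
  have hsplit : e.filter (· ∈ adj E u) = (E.filter (u ∈ ·)).biUnion (e ∩ ·) := by
    ext z
    simp only [mem_filter, mem_adj_s6, mem_biUnion, mem_inter]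
    constructor
    · rintro ⟨hze, -, f, hf, huf, hzf⟩
      exact ⟨f, ⟨hf, huf⟩, hze, hzf⟩
    · rintro ⟨f, ⟨hf, huf⟩, hze, hzf⟩
      exact ⟨hze, by rintro rfl; exact hu hze, f, hf, huf, hzf⟩
  rw [hsplit, card_biUnion]
  · refine (sum_congr rfl fun f hf => ?_).trans (card_eq_sum_ones _).symm
    obtain ⟨hfE, huf⟩ := mem_filter.1 hf
    exact le_antisymm (hlin e he f hfE (ne_of_mem_of_not_mem' huf hu).symm)
      (card_pos.2 (not_disjoint_iff_nonempty_inter.1 (hmeet f hfE huf)))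
  · intro f₁ h₁ f₂ h₂ hne
    simp only [mem_coe, mem_filter] at h₁ h₂
    refine disjoint_left.2 fun z hz₁ hz₂ => hne ?_
    rw [mem_inter] at hz₁ hz₂
    exact hlin.eq_of_mem_of_mem h₁.1 h₂.1 (ne_of_mem_of_not_mem hz₁.1 hu).symm
      h₁.2 hz₁.2 h₂.2 hz₂.2

end HG

theorem stmt6_general {V : Type*} [DecidableEq V] (k : ℕ)
    (E : Finset (Finset V)) (hlin : HG.Linear E)
    (hE : E.card ≤ k ^ 2)
    (hdeg : ∀ u ∈ HG.verts E, k ≤ HG.deg E u)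
    (v : V) (hv : v ∈ HG.verts E) (hdv : HG.deg E v = k)
    (hadj : ∀ u ∈ HG.adj E v ∪ {v}, (HG.adj E u).card = k ^ 2) :
    ∀ e ∈ E, ∀ u ∈ HG.verts E, u ∉ e →
      (e.filter (fun w => w ∉ HG.adj E u)).card = 1 := by
  obtain ⟨e₀, he₀, hve₀⟩ := HG.mem_verts.1 hv
  have hav : (HG.adj E v).card = k ^ 2 := hadj v (by simp)
  have hcentre : ∀ g ∈ E, ∃ x ∈ g, HG.deg E x = k ∧ (HG.adj E x).card = k ^ 2 := by
    intro g hg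
    obtain ⟨x, hxg, hxe₀⟩ := Finset.not_disjoint_iff.1
      (hlin.not_disjoint_of_card_adj_eq_sq hE hdeg hdv hav he₀ hve₀ hg)
    refine ⟨x, hxg, hlin.deg_eq_of_card_adj_eq_sq hE hdeg hdv hav he₀ hve₀ hxe₀, hadj x ?_⟩
    by_cases hxv : x = v
    · simp [hxv]
    · exact Finset.mem_union_left _ (HG.mem_adj_s6.2 ⟨hxv, e₀, he₀, hve₀, hxe₀⟩)
  intro e he u hu hue
  obtain ⟨f, hf, huf⟩ := HG.mem_verts.1 hu
  obtain ⟨x, hxe, hdx, hax⟩ := hcentre e he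
  obtain ⟨y, hyf, hdy, hay⟩ := hcentre f hf
  have hmeet : ∀ g ∈ E, u ∈ g → ¬Disjoint e g := fun g hg _ => by
    obtain ⟨z, hzg, hdz, haz⟩ := hcentre g hg
    exact hlin.not_disjoint_of_card_adj_eq_sq hE hdeg hdz haz hg hzg he
  have hsplit := Finset.card_filter_add_card_filter_not (s := e) (· ∈ HG.adj E u)
  rw [hlin.card_filter_mem_adj he hue hmeet,
    hlin.deg_eq_of_card_adj_eq_sq hE hdeg hdy hay hf hyf huf,
    hlin.card_eq_of_card_adj_eq_sq hE hdeg hdx hax he hxe] at hsplit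
  omega

theorem stmt6 {V : Type*} [DecidableEq V] (k : ℕ) (hk : 0 < k)
    (E : Finset (Finset V)) (hlin : HG.Linear E)
    (hE : E.card ≤ k ^ 2) (hsize : ∀ e ∈ E, e.card ≤ k ^ 2)
    (hdeg : ∀ u ∈ HG.verts E, k ≤ HG.deg E u)
    (v : V) (hv : v ∈ HG.verts E) (hdv : HG.deg E v = k)
    (hadj : ∀ u ∈ HG.adj E v ∪ {v}, (HG.adj E u).card = k ^ 2) :
    ∀ e ∈ E, ∀ u ∈ HG.verts E, u ∉ e →
      (e.filter (fun w => w ∉ HG.adj E u)).card = 1 :=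
  stmt6_general k E hlin hE hdeg v hv hdv hadj
end

section
/- Let H = (V, E) be a linear hypergraph with at most n edges, each with at most n vertices, and suppose every vertex has degree at least √n. Then H admits a proper n-coloring. -/
open scoped Classical

/-!
We may assume `n ≥ 2` (otherwise there is at most one vertex) and let `T = ⌈√n⌉ ≥ 2`. For `v ∈ e`,
the edges through `v` and the edges other than `e` through the other vertices of `e` are pairwise
distinct, so `deg v + (|e| - 1)(T - 1) ≤ n`; in particular every edge has at most `T + 1` vertices.

Take a maximum family `P` of disjoint non-adjacent pairs of vertices. Giving each pair one colour
and every other vertex its own colour uses `|V| - |P|` colours, so it suffices that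
`|V| ≤ n + |P|`. Otherwise maximality forces the unmatched vertices `U` to form a clique, and lets
us pick in each pair a vertex adjacent to all of `U` but one exceptional vertex; together with `U`
these form a set `K` of more than `n` vertices. Since the degrees sum to at most `n (T + 1)`, at
least two vertices `x ≠ y` of `U` have degree exactly `T` and are adjacent to all of `K`. The edge
count above then pins the neighbourhoods of `x` and `y` down to `K` and makes all their edges have
`T + 1` vertices; an edge through `y` missing `x` would meet each of the `T` edges through `x` at
most once, so every edge through `y` contains `x`, contradicting linearity.
-/

open Finset

theorem exists_injOn_fin {α : Type*} {s : Finset α} {n : ℕ} (hn : 0 < n) (hs : s.card ≤ n) :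
    ∃ g : α → Fin n, Set.InjOn g s := by
  have : Nonempty (Fin n) := ⟨⟨0, hn⟩⟩
  have hle : (s : Set α).encard ≤ (Set.univ : Set (Fin n)).encard := by
    rw [Set.encard_coe_eq_coe_finsetCard, Set.encard_univ, ENat.card_eq_coe_fintype_card,
      Fintype.card_fin]
    exact_mod_cast hs
  obtain ⟨g, -, hg⟩ := s.finite_toSet.exists_injOn_of_encard_le hle
  exact ⟨g, hg⟩

theorem pair_notMem_of_notMem_biUnion {α : Type*} {Q : Finset (Finset α)} {u w : α}
    (hw : w ∉ Q.biUnion id) : {u, w} ∉ Q :=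
  fun h => hw (mem_biUnion.2 ⟨_, h, mem_insert_of_mem (mem_singleton_self w)⟩)

namespace SimpleGraph

variable {V : Type*} (G : SimpleGraph V)

structure IsComplMatching (S : Finset V) (P : Finset (Finset V)) : Prop where
  subset : ∀ p ∈ P, p ⊆ S
  card_eq_two : ∀ p ∈ P, p.card = 2
  isIndepSet : ∀ p ∈ P, G.IsIndepSet (p : Set V)
  pairwiseDisjoint : (P : Set (Finset V)).PairwiseDisjoint id

theorem exists_isComplMatching_card_max (S : Finset V) :
    ∃ P, G.IsComplMatching S P ∧ ∀ Q, G.IsComplMatching S Q → Q.card ≤ P.card := by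
  have hempty : G.IsComplMatching S ∅ := ⟨by simp, by simp, by simp, by simp⟩
  obtain ⟨P, hP, hmax⟩ := exists_max_image
    (S.powerset.powerset.filter (G.IsComplMatching S)) card ⟨∅, by simpa using hempty⟩
  refine ⟨P, (mem_filter.1 hP).2, fun Q hQ => hmax Q ?_⟩
  simpa [mem_filter, hQ, subset_iff] using hQ.subset

variable {G} {S : Finset V} {P : Finset (Finset V)}

namespace IsComplMatching

theorem card_biUnion (hP : G.IsComplMatching S P) : (P.biUnion id).card = 2 * P.card := by
  rw [Finset.card_biUnion hP.pairwiseDisjoint, sum_congr rfl (by exact hP.card_eq_two), sum_const,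
    smul_eq_mul, mul_comm]

theorem biUnion_subset (hP : G.IsComplMatching S P) : P.biUnion id ⊆ S :=
  Finset.biUnion_subset.2 hP.subset

theorem card_sdiff_biUnion_add (hP : G.IsComplMatching S P) :
    (S \ P.biUnion id).card + 2 * P.card = S.card := by
  rw [← hP.card_biUnion]
  exact card_sdiff_add_card_eq_card hP.biUnion_subset

theorem mono (hP : G.IsComplMatching S P) {Q : Finset (Finset V)} (hQ : Q ⊆ P) :
    G.IsComplMatching S Q :=
  ⟨fun p hp => hP.subset p (hQ hp), fun p hp => hP.card_eq_two p (hQ hp),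
    fun p hp => hP.isIndepSet p (hQ hp), hP.pairwiseDisjoint.subset (by simpa using hQ)⟩

theorem insert_pair (hP : G.IsComplMatching S P) {u w : V} (hu : u ∈ S) (hw : w ∈ S) (huw : u ≠ w)
    (hadj : ¬ G.Adj u w) (hu' : u ∉ P.biUnion id) (hw' : w ∉ P.biUnion id) :
    G.IsComplMatching S (insert {u, w} P) := by
  refine ⟨?_, ?_, ?_, ?_⟩
  · simpa [forall_mem_insert, insert_subset_iff, hu, hw] using hP.subset
  · simpa [forall_mem_insert, card_pair huw] using hP.card_eq_two
  · simp only [forall_mem_insert, coe_pair]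
    exact ⟨Set.pairwise_pair.2 fun _ => ⟨hadj, fun h => hadj h.symm⟩, hP.isIndepSet⟩
  · rw [coe_insert, Set.pairwiseDisjoint_insert]
    refine ⟨hP.pairwiseDisjoint, fun q hq _ => Finset.disjoint_left.2 fun a ha haq => ?_⟩
    obtain rfl | rfl : a = u ∨ a = w := by simpa using ha
    exacts [hu' (mem_biUnion.2 ⟨q, hq, haq⟩), hw' (mem_biUnion.2 ⟨q, hq, haq⟩)]

theorem exists_card_lt_of_exchange (hP : G.IsComplMatching S P) {a b u w : V} (hab : a ≠ b)
    (hp : {a, b} ∈ P) (hu : u ∈ S \ P.biUnion id) (hw : w ∈ S \ P.biUnion id) (huw : u ≠ w)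
    (hau : ¬ G.Adj a u) (hbw : ¬ G.Adj b w) :
    ∃ Q, G.IsComplMatching S Q ∧ P.card < Q.card := by
  rw [mem_sdiff] at hu hw
  have ha : a ∈ ({a, b} : Finset V) := mem_insert_self a {b}
  have hb : b ∈ ({a, b} : Finset V) := mem_insert_of_mem (mem_singleton_self b)
  have hne : ∀ x ∈ ({a, b} : Finset V), ∀ y ∉ P.biUnion id, x ≠ y :=
    fun x hx y hy hxy => hy (mem_biUnion.2 ⟨_, hp, hxy ▸ hx⟩)
  -- replace the pair `{a, b}` by the two pairs `{a, u}` and `{b, w}`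
  set P' := P.erase {a, b}
  have hout : ∀ x, (x ∈ ({a, b} : Finset V) ∨ x ∉ P.biUnion id) → x ∉ P'.biUnion id := by
    rintro x hx hx'
    obtain ⟨q, hq, hxq⟩ := mem_biUnion.1 hx'
    obtain ⟨hqab, hqP⟩ := mem_erase.1 hq
    rcases hx with hx | hx
    · exact Finset.disjoint_left.1 (hP.pairwiseDisjoint hp hqP hqab.symm) hx hxq
    · exact hx (mem_biUnion.2 ⟨q, hqP, hxq⟩)
  have hout' : ∀ x, x ≠ a → x ≠ u → x ∉ P'.biUnion id → x ∉ (insert {a, u} P').biUnion id := by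
    intro x hxa hxu hx
    simp only [biUnion_insert, id, mem_union, mem_insert, mem_singleton]
    tauto
  have hu' : u ∉ P'.biUnion id := hout u (.inr hu.2)
  have hw' : w ∉ (insert {a, u} P').biUnion id :=
    hout' w (hne a ha w hw.2).symm huw.symm (hout w (.inr hw.2))
  have hP₁ : G.IsComplMatching S (insert {a, u} P') :=
    (hP.mono (erase_subset _ _)).insert_pair (hP.subset _ hp ha) hu.1 (hne a ha u hu.2) hau
      (hout a (.inl ha)) hu'
  refine ⟨_, hP₁.insert_pair (hP.subset _ hp hb) hw.1 (hne b hb w hw.2) hbw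
    (hout' b hab.symm (hne b hb u hu.2) (hout b (.inl hb))) hw', ?_⟩
  rw [card_insert_of_notMem (pair_notMem_of_notMem_biUnion hw'),
    card_insert_of_notMem (pair_notMem_of_notMem_biUnion hu'), card_erase_of_mem hp]
  have := card_pos.2 ⟨_, hp⟩
  omega

end IsComplMatching

section Maximum

variable (hP : G.IsComplMatching S P) (hmax : ∀ Q, G.IsComplMatching S Q → Q.card ≤ P.card)
include hP hmax

theorem isClique_sdiff_biUnion : G.IsClique ((S \ P.biUnion id : Finset V) : Set V) := by
  intro u hu w hw huw
  by_contra hadj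
  simp only [coe_sdiff, Set.mem_sdiff, mem_coe] at hu hw
  have hle := hmax _ (hP.insert_pair hu.1 hw.1 huw hadj hu.2 hw.2)
  rw [card_insert_of_notMem (pair_notMem_of_notMem_biUnion hw.2)] at hle
  omega

theorem exists_mem_forall_adj {p : Finset V} (hp : p ∈ P) :
    ∃ c w, c ∈ p ∧ ∀ u ∈ S \ P.biUnion id, u ≠ w → G.Adj c u := by
  obtain ⟨a, b, hab, rfl⟩ := card_eq_two.1 (hP.card_eq_two _ hp)
  by_cases hball : ∀ u ∈ S \ P.biUnion id, G.Adj b u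
  · exact ⟨b, b, mem_insert_of_mem (mem_singleton_self b), fun u hu _ => hball u hu⟩
  push Not at hball
  obtain ⟨w, hw, hbw⟩ := hball
  refine ⟨a, w, mem_insert_self a {b}, fun u hu huw => ?_⟩
  by_contra hau
  obtain ⟨Q, hQ, hlt⟩ := hP.exists_card_lt_of_exchange hab hp hu hw huw hau hbw
  exact (hmax Q hQ).not_gt hlt

theorem exists_almost_clique : ∃ K W : Finset V, S \ P.biUnion id ⊆ K ∧
    K.card + P.card = S.card ∧ W.card ≤ P.card ∧
    ∀ z ∈ (S \ P.biUnion id) \ W, ∀ t ∈ K, t ≠ z → G.Adj z t := by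
  choose c w hc hw using fun p : P => exists_mem_forall_adj hP hmax p.2
  refine ⟨(S \ P.biUnion id) ∪ P.attach.image c, P.attach.image w, subset_union_left, ?_,
    card_image_le.trans card_attach.le, ?_⟩
  · have hinj : Set.InjOn c P.attach := fun p _ q _ hpq => Subtype.ext <|
      hP.pairwiseDisjoint.elim p.2 q.2 (not_disjoint_iff.2 ⟨c p, hc p, hpq ▸ hc q⟩)
    have hdisj : Disjoint (S \ P.biUnion id) (P.attach.image c) := by
      refine Finset.disjoint_right.2 fun x hx hx' => (mem_sdiff.1 hx').2 ?_
      obtain ⟨p, -, rfl⟩ := mem_image.1 hx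
      exact mem_biUnion.2 ⟨p, p.2, hc p⟩
    rw [card_union_of_disjoint hdisj, card_image_of_injOn hinj, card_attach]
    have := hP.card_sdiff_biUnion_add
    omega
  · intro z hz t ht htz
    rw [mem_sdiff] at hz
    rcases mem_union.1 ht with ht | ht
    · exact isClique_sdiff_biUnion hP hmax (mem_coe.2 hz.1) (mem_coe.2 ht) htz.symm
    · obtain ⟨p, -, rfl⟩ := mem_image.1 ht
      exact (hw p z hz.1 fun h => hz.2 (mem_image.2 ⟨p, mem_attach P p, h.symm⟩)).symm

end Maximum

theorem IsComplMatching.exists_fin_coloring (hP : G.IsComplMatching S P) {n : ℕ} (hn : 0 < n)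
    (hS : S.card ≤ n + P.card) : ∃ f : V → Fin n, ∀ u ∈ S, ∀ w ∈ S, G.Adj u w → f u ≠ f w := by
  -- `π v` is the pair containing `v`, or `{v}` if `v` is unmatched
  let π : V → Finset V := fun v => insert v ((P.filter (v ∈ ·)).biUnion id)
  have hπ : ∀ v ∈ S, π v ∈ P ∪ (S \ P.biUnion id).image singleton := by
    intro v hv
    by_cases hvP : v ∈ P.biUnion id
    · obtain ⟨p, hp, hvp⟩ := mem_biUnion.1 hvP
      have hfilter : P.filter (v ∈ ·) = {p} := eq_singleton_iff_unique_mem.2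
        ⟨mem_filter.2 ⟨hp, hvp⟩, fun q hq => hP.pairwiseDisjoint.elim (mem_filter.1 hq).1 hp
          (not_disjoint_iff.2 ⟨v, (mem_filter.1 hq).2, hvp⟩)⟩
      have hπv : π v = p := by
        simp only [π, hfilter, singleton_biUnion, id]
        exact insert_eq_of_mem hvp
      exact mem_union_left _ (hπv ▸ hp)
    · have hfilter : P.filter (v ∈ ·) = ∅ :=
        filter_eq_empty_iff.2 fun p hp hvp => hvP (mem_biUnion.2 ⟨p, hp, hvp⟩)
      have hπv : π v = {v} := by simp only [π, hfilter, biUnion_empty, insert_empty]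
      exact mem_union_right _ (hπv ▸ mem_image_of_mem _ (mem_sdiff.2 ⟨hv, hvP⟩))
  have hcard : (S.image π).card ≤ n :=
    calc (S.image π).card ≤ (P ∪ (S \ P.biUnion id).image singleton).card :=
          card_le_card (image_subset_iff.2 hπ)
      _ ≤ P.card + (S \ P.biUnion id).card :=
          (card_union_le _ _).trans (Nat.add_le_add_left card_image_le _)
      _ ≤ n := by
          have := hP.card_sdiff_biUnion_add
          omega
  obtain ⟨g, hg⟩ := exists_injOn_fin hn hcard
  refine ⟨g ∘ π, fun u hu w hw hadj hf => ?_⟩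
  have hw' : w ∈ π u := hg (mem_image_of_mem π hu) (mem_image_of_mem π hw) hf ▸ mem_insert_self w _
  rcases mem_insert.1 hw' with rfl | hw'
  · exact G.irrefl hadj
  · obtain ⟨p, hp, hwp⟩ := mem_biUnion.1 hw'
    exact hP.isIndepSet p (mem_filter.1 hp).1 (mem_filter.1 hp).2 hwp (G.ne_of_adj hadj) hadj

end SimpleGraph

namespace HG

variable {V : Type*} {E : Finset (Finset V)}

def twoSection (E : Finset (Finset V)) : SimpleGraph V where
  Adj u w := u ≠ w ∧ ∃ e ∈ E, u ∈ e ∧ w ∈ e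
  symm := ⟨fun _ _ ⟨h, e, he, hu, hw⟩ => ⟨h.symm, e, he, hw, hu⟩⟩
  loopless := ⟨fun _ h => h.1 rfl⟩

theorem twoSection_adj {u w : V} :
    (twoSection E).Adj u w ↔ u ≠ w ∧ ∃ e ∈ E, u ∈ e ∧ w ∈ e :=
  Iff.rfl

theorem subset_verts {e : Finset V} (he : e ∈ E) : e ⊆ verts E :=
  le_sup (f := id) he

theorem card_verts_le_sum_card : (verts E).card ≤ ∑ e ∈ E, e.card := by
  rw [verts, sup_eq_biUnion]
  exact card_biUnion_le

theorem proper_of_forall_adj {m : ℕ} {f : V → Fin m}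
    (hf : ∀ u ∈ verts E, ∀ w ∈ verts E, (twoSection E).Adj u w → f u ≠ f w) : Proper E f :=
  fun e he u hu w hw huw =>
    hf u (subset_verts he hu) w (subset_verts he hw) (twoSection_adj.2 ⟨huw, e, he, hu, hw⟩)

theorem adj_eq_biUnion (v : V) : adj E v = (E.filter (v ∈ ·)).biUnion (·.erase v) := by
  ext u
  simp only [adj, mem_filter, mem_biUnion, mem_erase]
  constructor
  · rintro ⟨-, hne, e, he, hv, hu⟩
    exact ⟨e, ⟨he, hv⟩, hne, hu⟩
  · rintro ⟨e, ⟨he, hv⟩, hne, hu⟩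
    exact ⟨subset_verts he hu, hne, e, he, hv, hu⟩

theorem erase_subset_adj {K : Finset V} {z : V}
    (hK : ∀ t ∈ K, t ≠ z → (twoSection E).Adj z t) : K.erase z ⊆ adj E z := by
  intro t ht
  obtain ⟨htz, htK⟩ := mem_erase.1 ht
  obtain ⟨-, e, he, hz, hte⟩ := twoSection_adj.1 (hK t htK htz)
  exact mem_filter.2 ⟨subset_verts he hte, htz, e, he, hz, hte⟩

theorem erase_subset_adj_of_mem {e : Finset V} (he : e ∈ E) {v : V} (hv : v ∈ e) :
    e.erase v ⊆ adj E v := by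
  rw [adj_eq_biUnion]
  exact subset_biUnion_of_mem (·.erase v) (mem_filter.2 ⟨he, hv⟩ : e ∈ E.filter (v ∈ ·))

theorem card_adj_le_sum (z : V) : (adj E z).card ≤ ∑ e ∈ E.filter (z ∈ ·), (e.card - 1) := by
  rw [adj_eq_biUnion]
  exact card_biUnion_le.trans
    (sum_le_sum fun e he => (card_erase_of_mem (mem_filter.1 he).2).le)

theorem sum_deg : ∑ v ∈ verts E, deg E v = ∑ e ∈ E, e.card := by
  simp only [deg, card_eq_sum_ones, sum_filter]
  rw [sum_comm]
  refine sum_congr rfl fun e he => ?_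
  rw [← sum_filter, filter_mem_eq_inter, inter_eq_right.2 (subset_verts he)]

namespace Linear

variable (hlin : Linear E)
include hlin

theorem eq_of_mem_of_mem_s8 {e f : Finset V} (he : e ∈ E) (hf : f ∈ E) {a b : V} (hab : a ≠ b)
    (hae : a ∈ e) (haf : a ∈ f) (hbe : b ∈ e) (hbf : b ∈ f) : e = f := by
  by_contra hef
  have h2 : ({a, b} : Finset V).card ≤ (e ∩ f).card :=
    card_le_card (insert_subset (mem_inter.2 ⟨hae, haf⟩)
      (singleton_subset_iff.2 (mem_inter.2 ⟨hbe, hbf⟩)))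
  have := hlin e he f hf hef
  rw [card_pair hab] at h2
  omega

theorem sum_deg_sub_one_lt {e : Finset V} (he : e ∈ E) : ∑ u ∈ e, (deg E u - 1) < E.card := by
  -- the edges other than `e` through distinct vertices of `e` are distinct
  have hdisj : (e : Set V).PairwiseDisjoint fun u => (E.filter (u ∈ ·)).erase e := by
    intro u hu w hw huw
    refine Finset.disjoint_left.2 fun f hfu hfw => ?_
    obtain ⟨hfe, hf⟩ := mem_erase.1 hfu
    exact hfe (hlin.eq_of_mem_of_mem_s8 (mem_filter.1 hf).1 he huw (mem_filter.1 hf).2 hu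
      (mem_filter.1 (mem_of_mem_erase hfw)).2 hw)
  have hsub : e.biUnion (fun u => (E.filter (u ∈ ·)).erase e) ⊆ E.erase e :=
    biUnion_subset.2 fun u _ => erase_subset_erase e (filter_subset _ E)
  calc ∑ u ∈ e, (deg E u - 1) = (e.biUnion fun u => (E.filter (u ∈ ·)).erase e).card := by
        rw [card_biUnion hdisj]
        exact sum_congr rfl fun u hu => (card_erase_of_mem (mem_filter.2 ⟨he, hu⟩)).symm
    _ ≤ (E.erase e).card := card_le_card hsub
    _ < E.card := card_erase_lt_of_mem he

theorem card_le_deg_of_subset_adj {e : Finset V} (he : e ∈ E) {x : V} (hx : x ∉ e)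
    (hsub : e ⊆ adj E x) : e.card ≤ deg E x := by
  rw [adj_eq_biUnion, ← inter_eq_left, inter_biUnion] at hsub
  calc e.card = ((E.filter (x ∈ ·)).biUnion fun f => e ∩ f.erase x).card := by rw [hsub]
    _ ≤ ∑ f ∈ E.filter (x ∈ ·), (e ∩ f.erase x).card := card_biUnion_le
    _ ≤ ∑ f ∈ E.filter (x ∈ ·), 1 := sum_le_sum fun f hf => by
        obtain ⟨hfE, hxf⟩ := mem_filter.1 hf
        exact (card_le_card (inter_subset_inter_left (erase_subset x f))).trans
          (hlin e he f hfE fun h => hx (h ▸ hxf))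
    _ = deg E x := by rw [sum_const, smul_eq_mul, mul_one, deg]

end Linear

section MinDegree

variable {n T : ℕ} (hE : E.card ≤ n) (hdT : ∀ v ∈ verts E, T ≤ deg E v)
include hE hdT

theorem card_filter_lt_deg_add_le (hsize : ∀ e ∈ E, e.card ≤ T + 1) :
    ((verts E).filter (T < deg E ·)).card + (verts E).card * T ≤ n * (T + 1) :=
  calc ((verts E).filter (T < deg E ·)).card + (verts E).card * T
      = ∑ v ∈ verts E, (T + if T < deg E v then 1 else 0) := by
        rw [sum_add_distrib, sum_const, smul_eq_mul, ← card_filter, add_comm, mul_comm]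
    _ ≤ ∑ v ∈ verts E, deg E v := sum_le_sum fun v hv => by
        have := hdT v hv
        split_ifs <;> omega
    _ = ∑ e ∈ E, e.card := sum_deg
    _ ≤ ∑ _e ∈ E, (T + 1) := sum_le_sum hsize
    _ ≤ n * (T + 1) := by
        rw [sum_const, smul_eq_mul]
        exact Nat.mul_le_mul_right _ hE

variable (hlin : Linear E)
include hlin

theorem deg_add_mul_le {e : Finset V} (he : e ∈ E) {v : V} (hv : v ∈ e) :
    deg E v + (e.card - 1) * (T - 1) ≤ n := by
  have hsum := hlin.sum_deg_sub_one_lt he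
  rw [← add_sum_erase _ _ hv] at hsum
  have hlow : (e.erase v).card • (T - 1) ≤ ∑ u ∈ e.erase v, (deg E u - 1) :=
    card_nsmul_le_sum _ _ _ fun u hu =>
      Nat.sub_le_sub_right (hdT u (subset_verts he (mem_of_mem_erase hu))) 1
  rw [card_erase_of_mem hv, smul_eq_mul] at hlow
  have : 1 ≤ deg E v := card_pos.2 ⟨e, mem_filter.2 ⟨he, hv⟩⟩
  omega

theorem card_le_of_mem (hT : 2 ≤ T) (hnT : n ≤ T * T) {e : Finset V} (he : e ∈ E) :
    e.card ≤ T + 1 := by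
  rcases e.eq_empty_or_nonempty with rfl | ⟨v, hv⟩
  · simp
  have hsum := deg_add_mul_le hE hdT hlin he hv
  have hv' := hdT v (subset_verts he hv)
  by_contra! hlt
  obtain ⟨k, rfl⟩ : ∃ k, T = k + 2 := ⟨T - 2, by omega⟩
  obtain ⟨m, hm⟩ : ∃ m, e.card = m + k + 4 := ⟨e.card - k - 4, by omega⟩
  rw [hm, show m + k + 4 - 1 = m + k + 3 by omega, show k + 2 - 1 = k + 1 by omega] at hsum
  nlinarith

theorem card_adj_add_le (hT : 2 ≤ T) {z : V} (hz : deg E z = T) {e₀ : Finset V} (he₀ : e₀ ∈ E)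
    (hz₀ : z ∈ e₀) : (adj E z).card + T + 1 ≤ e₀.card + n := by
  have hmem : e₀ ∈ E.filter (z ∈ ·) := mem_filter.2 ⟨he₀, hz₀⟩
  -- each of the `T - 1` other edges `e` through `z` has `(T - 1) * (|e| - 1) ≤ n - T`
  have hrest : (T - 1) * ∑ e ∈ (E.filter (z ∈ ·)).erase e₀, (e.card - 1) ≤ (T - 1) * (n - T) := by
    rw [mul_sum]
    calc ∑ e ∈ (E.filter (z ∈ ·)).erase e₀, (T - 1) * (e.card - 1)
        ≤ ∑ _e ∈ (E.filter (z ∈ ·)).erase e₀, (n - T) := sum_le_sum fun e he => by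
          obtain ⟨heE, hze⟩ := mem_filter.1 (mem_of_mem_erase he)
          have := deg_add_mul_le hE hdT hlin heE hze
          rw [hz] at this
          rw [mul_comm]
          omega
      _ = (T - 1) * (n - T) := by
          rw [sum_const, card_erase_of_mem hmem, smul_eq_mul,
            show (E.filter (z ∈ ·)).card = T from hz]
  have hle := Nat.le_of_mul_le_mul_left hrest (by omega)
  have hadj := card_adj_le_sum (E := E) z
  rw [← add_sum_erase _ _ hmem] at hadj
  have hTn := deg_add_mul_le hE hdT hlin he₀ hz₀
  have : 1 ≤ e₀.card := card_pos.2 ⟨z, hz₀⟩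
  omega

section Clique

variable (hT : 2 ≤ T) {K : Finset V} (hK : n < K.card) {z : V} (hzK : z ∈ K) (hzT : deg E z = T)
  (hzadj : ∀ t ∈ K, t ≠ z → (twoSection E).Adj z t)
include hT hK hzK hzT hzadj

theorem le_card_of_forall_adj {e : Finset V} (he : e ∈ E) (hze : z ∈ e) : T + 1 ≤ e.card := by
  have h₁ := card_adj_add_le hE hdT hlin hT hzT he hze
  have h₂ := card_le_card (erase_subset_adj hzadj)
  rw [card_erase_of_mem hzK] at h₂
  omega

theorem adj_eq_erase_of_forall_adj (hnT : n ≤ T * T) : adj E z = K.erase z := by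
  obtain ⟨e, he⟩ : (E.filter (z ∈ ·)).Nonempty :=
    card_pos.1 (by rw [show (E.filter (z ∈ ·)).card = T from hzT]; omega)
  rw [mem_filter] at he
  have h₁ := card_adj_add_le hE hdT hlin hT hzT he.1 he.2
  have h₂ := card_le_of_mem hE hdT hlin hT hnT he.1
  refine (eq_of_subset_of_card_le (erase_subset_adj hzadj) ?_).symm
  rw [card_erase_of_mem hzK]
  omega

end Clique

theorem eq_of_forall_adj (hT : 2 ≤ T) (hnT : n ≤ T * T) {K : Finset V} (hK : n < K.card)
    {x y : V} (hx : x ∈ K) (hy : y ∈ K) (hxT : deg E x = T) (hyT : deg E y = T)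
    (hxadj : ∀ t ∈ K, t ≠ x → (twoSection E).Adj x t)
    (hyadj : ∀ t ∈ K, t ≠ y → (twoSection E).Adj y t) : x = y := by
  have hx' := adj_eq_erase_of_forall_adj hE hdT hlin hT hK hx hxT hxadj hnT
  have hy' := adj_eq_erase_of_forall_adj hE hdT hlin hT hK hy hyT hyadj hnT
  by_contra hxy
  -- an edge through `y` lies in `K`; missing `x`, it would lie in the neighbourhood of `x`
  have hxe : ∀ e ∈ E, y ∈ e → x ∈ e := by
    intro e he hye
    by_contra hxe
    have hsub : e ⊆ adj E x := by
      intro u hu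
      rw [hx']
      refine mem_erase.2 ⟨fun h => hxe (h ▸ hu), ?_⟩
      by_cases huy : u = y
      · exact huy ▸ hy
      · exact mem_of_mem_erase (hy' ▸ erase_subset_adj_of_mem he hye (mem_erase.2 ⟨huy, hu⟩))
    have h₁ := hlin.card_le_deg_of_subset_adj he hxe hsub
    have h₂ := le_card_of_forall_adj hE hdT hlin hT hK hy hyT hyadj he hye
    omega
  obtain ⟨e, he, f, hf, hef⟩ := one_lt_card.1
    (show 1 < (E.filter (y ∈ ·)).card by rw [show (E.filter (y ∈ ·)).card = T from hyT]; omega)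
  rw [mem_filter] at he hf
  exact hef (hlin.eq_of_mem_of_mem_s8 he.1 hf.1 hxy (hxe e he.1 he.2) (hxe f hf.1 hf.2) he.2 hf.2)

theorem card_verts_le_add_card (hT : 2 ≤ T) (hnT : n ≤ T * T) {P : Finset (Finset V)}
    (hP : (twoSection E).IsComplMatching (verts E) P)
    (hmax : ∀ Q, (twoSection E).IsComplMatching (verts E) Q → Q.card ≤ P.card) :
    (verts E).card ≤ n + P.card := by
  by_contra! hN
  obtain ⟨K, W, hUK, hK, hW, hKadj⟩ := SimpleGraph.exists_almost_clique hP hmax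
  set U := verts E \ P.biUnion id
  set X := (verts E).filter (T < deg E ·)
  have hX : X.card + (verts E).card * T ≤ n * (T + 1) :=
    card_filter_lt_deg_add_le hE hdT fun e he => card_le_of_mem hE hdT hlin hT hnT he
  have hU : U.card + 2 * P.card = (verts E).card := hP.card_sdiff_biUnion_add
  have hgood : 1 < ((U \ W) \ X).card := by
    have h₁ := card_le_card_sdiff_add_card (s := U \ W) (t := X)
    have h₂ := card_le_card_sdiff_add_card (s := U) (t := W)
    have h₃ : (n + P.card + 1) * T ≤ (verts E).card * T := Nat.mul_le_mul_right T hN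
    have h₄ : (P.card + 1) * 2 ≤ (P.card + 1) * T := Nat.mul_le_mul_left _ hT
    linarith
  have hdeg : ∀ z ∈ (U \ W) \ X, deg E z = T := fun z hz => by
    simp only [X, mem_sdiff, mem_filter, not_and, not_lt, U] at hz
    exact le_antisymm (hz.2 hz.1.1.1) (hdT z hz.1.1.1)
  obtain ⟨x, hx, y, hy, hxy⟩ := one_lt_card.1 hgood
  have hxW := (mem_sdiff.1 hx).1
  have hyW := (mem_sdiff.1 hy).1
  exact hxy (eq_of_forall_adj hE hdT hlin hT hnT (by omega) (hUK (mem_sdiff.1 hxW).1)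
    (hUK (mem_sdiff.1 hyW).1) (hdeg x hx) (hdeg y hy) (hKadj x hxW) (hKadj y hyW))

end MinDegree

end HG

theorem le_ceil_sqrt_mul_self (n : ℕ) : n ≤ ⌈√(n : ℝ)⌉₊ * ⌈√(n : ℝ)⌉₊ := by
  have h : (n : ℝ) ≤ ⌈√(n : ℝ)⌉₊ * ⌈√(n : ℝ)⌉₊ :=
    calc (n : ℝ) = √n * √n := (Real.mul_self_sqrt n.cast_nonneg).symm
      _ ≤ _ := mul_self_le_mul_self (Real.sqrt_nonneg _) (Nat.le_ceil _)
  exact_mod_cast h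

theorem two_le_ceil_sqrt {n : ℕ} (hn : 2 ≤ n) : 2 ≤ ⌈√(n : ℝ)⌉₊ := by
  rw [Nat.succ_le_iff, Nat.lt_ceil, Nat.cast_one, Real.lt_sqrt zero_le_one, one_pow]
  exact_mod_cast hn

theorem stmt8_general {V : Type*} (n : ℕ) (hn : 0 < n)
    (E : Finset (Finset V)) (hlin : HG.Linear E)
    (hE : E.card ≤ n) (hsize : ∀ e ∈ E, e.card ≤ n)
    (hdeg : ∀ v ∈ HG.verts E, Real.sqrt n ≤ (HG.deg E v : ℝ)) :
    ∃ f : V → Fin n, HG.Proper E f := by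
  obtain ⟨P, hP, hmax⟩ := (HG.twoSection E).exists_isComplMatching_card_max (HG.verts E)
  have hcard : (HG.verts E).card ≤ n + P.card := by
    rcases le_or_gt n 1 with hn₁ | hn₂
    · calc (HG.verts E).card ≤ ∑ e ∈ E, e.card := HG.card_verts_le_sum_card
        _ ≤ E.card * n := by simpa using Finset.sum_le_card_nsmul E _ n hsize
        _ ≤ n + P.card := by nlinarith
    · exact HG.card_verts_le_add_card hE (fun v hv => Nat.ceil_le.2 (hdeg v hv)) hlin
        (two_le_ceil_sqrt hn₂) (le_ceil_sqrt_mul_self n) hP hmax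
  obtain ⟨f, hf⟩ := hP.exists_fin_coloring hn hcard
  exact ⟨f, HG.proper_of_forall_adj hf⟩

theorem stmt8 {V : Type*} [DecidableEq V] (n : ℕ) (hn : 0 < n)
    (E : Finset (Finset V)) (hlin : HG.Linear E)
    (hE : E.card ≤ n) (hsize : ∀ e ∈ E, e.card ≤ n)
    (hdeg : ∀ v ∈ HG.verts E, Real.sqrt n ≤ (HG.deg E v : ℝ)) :
    ∃ f : V → Fin n, HG.Proper E f :=
  stmt8_general n hn E hlin hE hsize hdeg
end

section
/- Let H be a linear hypergraph with at most n edges, and let v be a vertex with d(v) > √n. Then for every edge E containing v, the number of vertices u in E \ {v} with d(u) ≥ d(v) is at most (n − d(v))/(d(v) − 1). -/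
open scoped Classical

theorem stmt9 {V : Type*} [DecidableEq V] (n : ℕ)
    (E : Finset (Finset V)) (hlin : HG.Linear E) (hE : E.card ≤ n)
    (v : V) (hdv : Real.sqrt n < (HG.deg E v : ℝ)) :
    ∀ e ∈ E, v ∈ e →
      (((e.erase v).filter (fun u => HG.deg E v ≤ HG.deg E u)).card : ℝ) ≤
        ((n : ℝ) - HG.deg E v) / ((HG.deg E v : ℝ) - 1) := by
  intro e he hve
  have hdeg : ∀ u : V, HG.deg E u = (E.filter (fun f => u ∈ f)).card := by
    intro u
    unfold HG.deg
    congr 1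
    ext f
    simp
  have hlin' : ∀ e₁ ∈ E, ∀ e₂ ∈ E, e₁ ≠ e₂ → (e₁ ∩ e₂).card ≤ 1 := by
    intro a ha b hb hab
    have h := hlin a ha b hb hab
    convert h using 2
    ext x
    simp
  set dv := HG.deg E v with hdvdef
  have hdv1 : 1 ≤ dv := by
    rw [hdvdef, hdeg]
    exact Finset.card_pos.mpr ⟨e, Finset.mem_filter.mpr ⟨he, hve⟩⟩
  have hdvn : dv ≤ n := by
    rw [hdvdef, hdeg]
    exact le_trans (Finset.card_filter_le _ _) hE
  -- dv ≥ 2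
  have hsq : (n : ℝ) < (dv : ℝ) ^ 2 := by
    have h0 : (0 : ℝ) < (dv : ℝ) := by exact_mod_cast hdv1
    have := (Real.sqrt_lt' h0).mp hdv
    exact this
  have hsqN : n < dv * dv := by
    have : (n : ℝ) < ((dv * dv : ℕ) : ℝ) := by push_cast; nlinarith
    exact_mod_cast this
  have hdv2 : 2 ≤ dv := by nlinarith
  set S := (e.erase v).filter (fun u => dv ≤ HG.deg E u) with hS
  set F : V → Finset (Finset V) :=
    fun u => E.filter (fun f => u ∈ f ∧ f ≠ e) with hF
  have hSmem : ∀ u ∈ S, u ∈ e ∧ u ≠ v ∧ dv ≤ HG.deg E u := by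
    intro u hu
    obtain ⟨hu1, hu2⟩ := Finset.mem_filter.mp hu
    exact ⟨Finset.mem_of_mem_erase hu1, Finset.ne_of_mem_erase hu1, hu2⟩
  -- vertex v not in any f ∈ F u
  have hvnot : ∀ u ∈ S, ∀ f ∈ F u, v ∉ f := by
    intro u hu f hf hvf
    obtain ⟨hfE, huf, hfe⟩ := Finset.mem_filter.mp hf
    obtain ⟨hue, huv, _⟩ := hSmem u hu
    have h1 := hlin' f hfE e he hfe
    exact absurd h1 (not_le.mpr (Finset.one_lt_card.mpr
      ⟨u, Finset.mem_inter.mpr ⟨huf, hue⟩, v,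
        Finset.mem_inter.mpr ⟨hvf, hve⟩, huv⟩))
  -- pairwise disjoint
  have hdisj : ∀ u ∈ S, ∀ w ∈ S, u ≠ w → Disjoint (F u) (F w) := by
    intro u hu w hw huw
    rw [Finset.disjoint_left]
    intro f hfu hfw
    obtain ⟨hfE, huf, hfe⟩ := Finset.mem_filter.mp hfu
    obtain ⟨_, hwf, _⟩ := Finset.mem_filter.mp hfw
    obtain ⟨hue, _, _⟩ := hSmem u hu
    obtain ⟨hwe, _, _⟩ := hSmem w hw
    have h1 := hlin' f hfE e he hfe
    exact absurd h1 (not_le.mpr (Finset.one_lt_card.mpr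
      ⟨u, Finset.mem_inter.mpr ⟨huf, hue⟩, w,
        Finset.mem_inter.mpr ⟨hwf, hwe⟩, huw⟩))
  -- card of F u
  have hcardF : ∀ u ∈ S, dv - 1 ≤ (F u).card := by
    intro u hu
    obtain ⟨hue, _, hdu⟩ := hSmem u hu
    have heq : F u = (E.filter (fun f => u ∈ f)).erase e := by
      ext f
      simp only [hF, Finset.mem_filter, Finset.mem_erase]
      tauto
    rw [heq, Finset.card_erase_of_mem
      (Finset.mem_filter.mpr ⟨he, hue⟩)]
    have hdeq := hdeg u
    omega
  -- key counting inequality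
  have hsub : S.biUnion F ⊆ E.filter (fun f => v ∉ f) := by
    intro f hf
    obtain ⟨u, hu, hfu⟩ := Finset.mem_biUnion.mp hf
    exact Finset.mem_filter.mpr ⟨(Finset.mem_filter.mp hfu).1, hvnot u hu f hfu⟩
  have hcompl : (E.filter (fun f => v ∉ f)).card = E.card - dv := by
    have h := Finset.card_filter_add_card_filter_not
      (s := E) (p := fun f => v ∈ f)
    have h2 : dv = (E.filter (fun f => v ∈ f)).card := by
      rw [hdvdef, hdeg]
    omega
  have key : S.card * (dv - 1) ≤ n - dv := by
    calc S.card * (dv - 1) = ∑ _u ∈ S, (dv - 1) := by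
          rw [Finset.sum_const, smul_eq_mul]
      _ ≤ ∑ u ∈ S, (F u).card := Finset.sum_le_sum hcardF
      _ = (S.biUnion F).card := (Finset.card_biUnion hdisj).symm
      _ ≤ (E.filter (fun f => v ∉ f)).card := Finset.card_le_card hsub
      _ = E.card - dv := hcompl
      _ ≤ n - dv := by omega
  -- conclude over ℝ
  have hpos : (0 : ℝ) < (dv : ℝ) - 1 := by
    have : (2 : ℝ) ≤ (dv : ℝ) := by exact_mod_cast hdv2
    linarith
  rw [le_div_iff₀ hpos]
  have keyR : (S.card : ℝ) * ((dv : ℝ) - 1) ≤ (n : ℝ) - dv := by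
    have h1 : ((S.card * (dv - 1) : ℕ) : ℝ) ≤ ((n - dv : ℕ) : ℝ) := by
      exact_mod_cast key
    rw [Nat.cast_mul, Nat.cast_sub hdv1, Nat.cast_sub hdvn] at h1
    push_cast at h1 ⊢
    linarith
  exact keyR
end

section
/- Let H be a linear hypergraph with at most n edges, and let v be a vertex with d(v) > √n. Then the number of vertices u adjacent to v with d(u) ≥ d(v) is strictly less than n. -/
open scoped Classical

/-!
Let `d = deg v > √n` and let `S` be the set of neighbours `u` of `v` with `deg u ≥ d`. By linearity
only one edge contains both `u` and `v`, so each `u ∈ S` lies on at least `d - 1` of the at most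
`n - d` edges avoiding `v`; and an edge `f ∌ v` meets `S` in at most `d` vertices, since distinct
vertices of `f ∩ S` lie on distinct edges through `v`. Hence `(d - 1) |S| ≤ d (n - d)`, and
`|S| ≥ n` would force `d² ≤ n`.
-/

open Finset

namespace HG

variable {V : Type*} {E : Finset (Finset V)}

theorem Linear.eq_of_mem_inter (hlin : Linear E) {e f : Finset V} (he : e ∈ E) (hf : f ∈ E)
    (hef : e ≠ f) {u w : V} (hue : u ∈ e) (huf : u ∈ f) (hwe : w ∈ e) (hwf : w ∈ f) : u = w :=
  card_le_one.mp (hlin e he f hf hef) u (mem_inter.mpr ⟨hue, huf⟩) w (mem_inter.mpr ⟨hwe, hwf⟩)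

theorem Linear.card_filter_mem_mem_le_one (hlin : Linear E) {u v : V} (huv : u ≠ v) :
    #(E.filter fun e => u ∈ e ∧ v ∈ e) ≤ 1 := by
  refine card_le_one.mpr fun a ha b hb => ?_
  rw [mem_filter] at ha hb
  by_contra hab
  exact huv (hlin.eq_of_mem_inter ha.1 hb.1 hab ha.2.1 hb.2.1 ha.2.2 hb.2.2)

theorem deg_eq_card_filter_mem_mem_add (E : Finset (Finset V)) (u v : V) :
    deg E u = #(E.filter fun e => u ∈ e ∧ v ∈ e) + #(E.filter fun e => u ∈ e ∧ v ∉ e) := by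
  rw [deg, ← card_filter_add_card_filter_not (fun e => v ∈ e), filter_filter, filter_filter]

theorem Linear.deg_le_card_filter_mem_not_mem_add_one (hlin : Linear E) {u v : V} (huv : u ≠ v) :
    deg E u ≤ #(E.filter fun e => u ∈ e ∧ v ∉ e) + 1 := by
  have := hlin.card_filter_mem_mem_le_one huv
  rw [deg_eq_card_filter_mem_mem_add E u v]
  omega

theorem Linear.card_filter_adj_mem_le_deg (hlin : Linear E) {v : V} {f : Finset V} (hf : f ∈ E)
    (hvf : v ∉ f) : #((adj E v).filter (· ∈ f)) ≤ deg E v := by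
  calc #((adj E v).filter (· ∈ f))
      ≤ #((E.filter (v ∈ ·)).biUnion (· ∩ f)) := by
        refine card_le_card fun u hu => ?_
        obtain ⟨hu, huf⟩ := mem_filter.mp hu
        obtain ⟨-, -, e, he, hve, hue⟩ := mem_filter.mp hu
        exact mem_biUnion.mpr ⟨e, mem_filter.mpr ⟨he, hve⟩, mem_inter.mpr ⟨hue, huf⟩⟩
    _ ≤ ∑ e ∈ E.filter (v ∈ ·), #(e ∩ f) := card_biUnion_le
    _ ≤ ∑ e ∈ E.filter (v ∈ ·), 1 := sum_le_sum fun e he => by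
        obtain ⟨he, hve⟩ := mem_filter.mp he
        exact hlin e he f hf (by rintro rfl; exact hvf hve)
    _ = deg E v := by rw [sum_const, smul_eq_mul, mul_one, deg]

theorem Linear.card_mul_sub_one_le (hlin : Linear E) (v : V) {S : Finset V} {k : ℕ}
    (hS : S ⊆ adj E v) (hk : ∀ u ∈ S, k ≤ deg E u) :
    #S * (k - 1) ≤ #(E.filter (v ∉ ·)) * deg E v := by
  simp only [← smul_eq_mul]
  refine card_nsmul_le_card_nsmul (fun u f => u ∈ f) (fun u hu => ?_) (fun f hf => ?_)
  · have hdeg := hlin.deg_le_card_filter_mem_not_mem_add_one (mem_filter.mp (hS hu)).2.1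
    rw [bipartiteAbove, filter_filter, Nat.cast_id]
    simp only [and_comm (a := v ∉ _)]
    have := hk u hu
    omega
  · obtain ⟨hf, hvf⟩ := mem_filter.mp hf
    exact (card_le_card (filter_subset_filter _ hS)).trans (hlin.card_filter_adj_mem_le_deg hf hvf)

end HG

theorem Nat.lt_of_mul_sub_one_le_sub_mul {n m d s : ℕ} (hdm : d ≤ m) (hmn : m ≤ n)
    (hn : n < d ^ 2) (h : s * (d - 1) ≤ (m - d) * d) : s < n := by
  by_contra! hs
  have hd : 1 ≤ d := Nat.pos_of_ne_zero (by rintro rfl; omega)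
  have := (Nat.mul_le_mul_right (d - 1) hs).trans h
  zify [hd, hdm] at this hn
  nlinarith

theorem stmt10_general {V : Type*} (n : ℕ)
    (E : Finset (Finset V)) (hlin : HG.Linear E) (hE : E.card ≤ n)
    (v : V) (hdv : Real.sqrt n < (HG.deg E v : ℝ)) :
    ((HG.adj E v).filter (fun u => HG.deg E v ≤ HG.deg E u)).card < n := by
  have hn : n < HG.deg E v ^ 2 := by
    exact_mod_cast (Real.sqrt_lt' ((Real.sqrt_nonneg _).trans_lt hdv)).mp hdv
  have hcount := hlin.card_mul_sub_one_le v (k := HG.deg E v) (filter_subset _ _)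
    fun u hu => (mem_filter.mp hu).2
  have hsplit : HG.deg E v + #(E.filter (v ∉ ·)) = #E :=
    card_filter_add_card_filter_not (v ∈ ·)
  rw [show #(E.filter (v ∉ ·)) = #E - HG.deg E v by omega] at hcount
  exact Nat.lt_of_mul_sub_one_le_sub_mul (card_filter_le _ _) hE hn hcount

theorem stmt10 {V : Type*} [DecidableEq V] (n : ℕ)
    (E : Finset (Finset V)) (hlin : HG.Linear E) (hE : E.card ≤ n)
    (v : V) (hdv : Real.sqrt n < (HG.deg E v : ℝ)) :
    ((HG.adj E v).filter (fun u => HG.deg E v ≤ HG.deg E u)).card < n :=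
  stmt10_general n E hlin hE v hdv
end
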